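/- arXiv:math/0606158 — 15 statements merged into one kernel-verified Lean document; each statement's English description precedes it below -/
import Mathlib

section
/- A ring R is von Neumann regular if and only if every right R-module is absolutely pure (i.e., FP-injective, meaning Ext^1(F, M) = 0 for every finitely presented module F). -/
/-!
Over a von Neumann regular ring `A`, every principal left ideal `A a = A (x a)` is generated by
an idempotent, and hence so is every finitely generated left ideal (`A e + A b = A e + A (b - b e)`,
and two idempotents `e`, `f` with `f e = 0` give `A e + A f = A (e + f - e f)`). Splitting off
the first coordinate, every finitely generated submodule of `Aⁿ` is then a direct summand, so
finitely presented modules are projective, and a submodule `L ≤ N` with `N ⧸ L` finitely presented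
is a direct summand; maps out of `L` therefore extend to `N`.
Conversely, extending the identity of `A a` along `A a ≤ A` gives `g` with
`a = g a = a * g 1 ∈ a A a`. Right `R`-modules are left `Rᵐᵒᵖ`-modules, and regularity is
self-dual.
-/

/-- A module `M` over a ring `A` is *absolutely pure* (FP-injective) if every linear map
into `M` from a submodule `L` of a module `N` with `N ⧸ L` finitely presented extends to `N`
(equivalently, `Ext¹(F, M) = 0` for every finitely presented `F`). -/
def FPInjective (A : Type) [Ring A] (M : Type) [AddCommGroup M] [Module A M] : Prop :=
  ∀ (N : Type) [AddCommGroup N] [Module A N] (L : Submodule A N),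
    Module.FinitePresentation A (N ⧸ L) →
      ∀ f : L →ₗ[A] M, ∃ g : N →ₗ[A] M, ∀ x : L, g x = f x

open Submodule

def IsVonNeumannRegular (A : Type*) [Ring A] : Prop :=
  ∀ a : A, ∃ x : A, a = a * x * a

section Idempotents

variable {A : Type*} [Ring A]

theorem IsIdempotentElem.mem_span_singleton_iff {e : A} (he : IsIdempotentElem e) {x : A} :
    x ∈ span A {e} ↔ x * e = x := by
  refine ⟨fun hx => ?_, fun hx => mem_span_singleton.mpr ⟨x, hx⟩⟩
  obtain ⟨c, rfl⟩ := mem_span_singleton.mp hx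
  rw [smul_eq_mul, mul_assoc, he.eq]

theorem span_singleton_eq_span_singleton_mul {x a : A} (hx : a = a * x * a) :
    span A {a} = span A {x * a} := by
  refine le_antisymm ?_ ?_ <;> rw [span_singleton_le_iff_mem, mem_span_singleton]
  · exact ⟨a, by rw [smul_eq_mul, ← mul_assoc, ← hx]⟩
  · exact ⟨x, rfl⟩

theorem isIdempotentElem_mul_of_eq_mul_mul {x a : A} (hx : a = a * x * a) :
    IsIdempotentElem (x * a) := by
  rw [IsIdempotentElem, mul_assoc, ← mul_assoc a, ← hx]

theorem span_singleton_sup_span_singleton_of_mul_eq_zero {e f : A} (he : IsIdempotentElem e)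
    (hf : IsIdempotentElem f) (hfe : f * e = 0) :
    IsIdempotentElem (e + f - e * f) ∧ span A {e} ⊔ span A {f} = span A {e + f - e * f} := by
  set g := e + f - e * f
  have heg : e * g = e := by simp only [g, mul_sub, mul_add, ← mul_assoc, he.eq]; abel
  have hfg : f * g = f := by simp only [g, mul_sub, mul_add, ← mul_assoc, hf.eq, hfe]; simp
  refine ⟨?_, le_antisymm (sup_le ?_ ?_) ?_⟩
  · calc g * g = e * g + f * g - e * (f * g) := by simp only [g, sub_mul, add_mul, mul_assoc]
      _ = g := by rw [heg, hfg]
  · exact span_singleton_le_iff_mem _ _ |>.mpr (mem_span_singleton.mpr ⟨e, heg⟩)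
  · exact span_singleton_le_iff_mem _ _ |>.mpr (mem_span_singleton.mpr ⟨f, hfg⟩)
  · rw [span_singleton_le_iff_mem, mem_sup]
    exact ⟨e, mem_span_singleton_self e, (1 - e) * f, mem_span_singleton.mpr ⟨1 - e, rfl⟩,
      by simp only [g, sub_mul, one_mul]; abel⟩

end Idempotents

namespace IsVonNeumannRegular

variable {A : Type*} [Ring A] (hA : IsVonNeumannRegular A)
include hA

theorem exists_isIdempotentElem_span_singleton_sup (e b : A) (he : IsIdempotentElem e) :
    ∃ g : A, IsIdempotentElem g ∧ span A {e} ⊔ span A {b} = span A {g} := by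
  set c := b - b * e
  obtain ⟨y, hy⟩ := hA c
  have hce : c * e = 0 := by simp only [c, sub_mul, mul_assoc, he.eq, sub_self]
  have hsup : span A {e} ⊔ span A {b} = span A {e} ⊔ span A {c} := by
    refine le_antisymm (sup_le le_sup_left ?_) (sup_le le_sup_left ?_) <;>
      rw [span_singleton_le_iff_mem, mem_sup]
    · exact ⟨b * e, mem_span_singleton.mpr ⟨b, rfl⟩, c, mem_span_singleton_self c,
        by simp only [c]; abel⟩
    · exact ⟨-(b * e), neg_mem (mem_span_singleton.mpr ⟨b, rfl⟩), b, mem_span_singleton_self b,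
        by simp only [c]; abel⟩
  obtain ⟨hg, hspan⟩ := span_singleton_sup_span_singleton_of_mul_eq_zero he
    (isIdempotentElem_mul_of_eq_mul_mul hy) (by rw [mul_assoc, hce, mul_zero])
  exact ⟨_, hg, by rw [hsup, span_singleton_eq_span_singleton_mul hy, hspan]⟩

theorem exists_isIdempotentElem_eq_span_singleton (I : Submodule A A) (hI : I.FG) :
    ∃ e : A, IsIdempotentElem e ∧ I = span A {e} := by
  induction I, hI using Submodule.fg_induction with
  | singleton a =>
    obtain ⟨x, hx⟩ := hA a
    exact ⟨x * a, isIdempotentElem_mul_of_eq_mul_mul hx, span_singleton_eq_span_singleton_mul hx⟩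
  | sup I J _ _ hI hJ =>
    obtain ⟨e, he, rfl⟩ := hI
    obtain ⟨f, -, rfl⟩ := hJ
    obtain ⟨g, hg, hspan⟩ := hA.exists_isIdempotentElem_span_singleton_sup e f he
    exact ⟨g, hg, hspan⟩

end IsVonNeumannRegular

def FGSubmodulesAreRetracts (A M : Type*) [Ring A] [AddCommGroup M] [Module A M] : Prop :=
  ∀ K : Submodule A M, K.FG → ∃ p : M →ₗ[A] M, LinearMap.IsProj K p

namespace FGSubmodulesAreRetracts

variable {A M N : Type*} [Ring A] [AddCommGroup M] [Module A M] [AddCommGroup N] [Module A N]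

theorem of_subsingleton [Subsingleton M] : FGSubmodulesAreRetracts A M :=
  fun K _ => ⟨0, fun _ => K.zero_mem, fun _ _ => Subsingleton.elim _ _⟩

theorem of_linearEquiv (e : M ≃ₗ[A] N) (h : FGSubmodulesAreRetracts A M) :
    FGSubmodulesAreRetracts A N := by
  intro K hK
  obtain ⟨p, hp⟩ := h (K.map (e.symm : N →ₗ[A] M)) (hK.map _)
  refine ⟨e ∘ₗ p ∘ₗ e.symm, fun x => ?_, fun x hx => ?_⟩
  · simpa [Submodule.mem_map_equiv] using hp.map_mem (e.symm x)
  · simp [hp.map_id (e.symm x) (mem_map_of_mem hx)]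

/-- `fst '' K = A e` with `e` idempotent; for `u ∈ K` over `e`, the map `x ↦ x - (x.1 * e) • u`
sends `K` into `K ∩ (0 × M)`, where the retraction of `M` applies. -/
theorem prod (hA : IsVonNeumannRegular A) (h : FGSubmodulesAreRetracts A M) :
    FGSubmodulesAreRetracts A (A × M) := by
  intro K hK
  obtain ⟨e, he, hKe⟩ := hA.exists_isIdempotentElem_eq_span_singleton _ (hK.map (.fst A A M))
  obtain ⟨u, huK, hu⟩ : e ∈ K.map (.fst A A M) := hKe ▸ mem_span_singleton_self e
  let τ : A × M →ₗ[A] A × M :=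
    LinearMap.toSpanSingleton A _ u ∘ₗ LinearMap.toSpanSingleton A A e ∘ₗ .fst A A M
  have hτ : ∀ x, τ x = (x.1 * e) • u := fun x => rfl
  have hτK : ∀ x, τ x ∈ K := fun x => K.smul_mem _ huK
  let θ : A × M →ₗ[A] M := .snd A A M ∘ₗ (LinearMap.id - τ)
  have hθ : ∀ x ∈ K, LinearMap.inr A A M (θ x) = x - τ x := by
    intro x hx
    have hx₁ : x.1 * e = x.1 := he.mem_span_singleton_iff.mp (hKe ▸ mem_map_of_mem hx)
    ext
    · change 0 = x.1 - x.1 * e * u.1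
      rw [show u.1 = e from hu, mul_assoc, he.eq, hx₁, sub_self]
    · rfl
  obtain ⟨p, hp⟩ := h (K.map θ) (hK.map θ)
  refine ⟨τ + LinearMap.inr A A M ∘ₗ p ∘ₗ θ, fun x => ?_, fun x hx => ?_⟩
  · obtain ⟨k, hk, hpk⟩ := hp.map_mem (θ x)
    refine K.add_mem (hτK x) ?_
    simp only [LinearMap.comp_apply, ← hpk, hθ k hk]
    exact K.sub_mem hk (hτK k)
  · change τ x + LinearMap.inr A A M (p (θ x)) = x
    rw [hp.map_id (θ x) (mem_map_of_mem hx), hθ x hx, add_sub_cancel]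

theorem pi_fin (hA : IsVonNeumannRegular A) : ∀ n, FGSubmodulesAreRetracts A (Fin n → A)
  | 0 => of_subsingleton
  | n + 1 => ((pi_fin hA n).prod hA).of_linearEquiv (Fin.consLinearEquiv A fun _ => A)

end FGSubmodulesAreRetracts

theorem Module.Projective.quotient_of_isProj {A M : Type*} [Ring A] [AddCommGroup M]
    [Module A M] [Module.Projective A M] {K : Submodule A M} {p : M →ₗ[A] M}
    (hp : LinearMap.IsProj K p) : Module.Projective A (M ⧸ K) :=
  .of_split (K.liftQ (LinearMap.id - p) fun x hx => by simp [hp.map_id x hx]) K.mkQ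
    (Submodule.linearMap_qext _ <| LinearMap.ext fun x => by
      simpa [Submodule.Quotient.eq] using neg_mem (hp.map_mem x))

theorem IsVonNeumannRegular.projective_of_finitePresentation {A : Type*} [Ring A]
    (hA : IsVonNeumannRegular A) (F : Type*) [AddCommGroup F] [Module A F]
    [Module.FinitePresentation A F] : Module.Projective A F := by
  obtain ⟨n, K, e, hK⟩ := Module.FinitePresentation.exists_fin A F
  obtain ⟨p, hp⟩ := FGSubmodulesAreRetracts.pi_fin hA n K hK
  have := Module.Projective.quotient_of_isProj hp
  exact .of_equiv e.symm

theorem Submodule.exists_extend_of_projective_quotient {A N M : Type*} [Ring A]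
    [AddCommGroup N] [Module A N] [AddCommGroup M] [Module A M] (L : Submodule A N)
    [Module.Projective A (N ⧸ L)] (f : L →ₗ[A] M) : ∃ g : N →ₗ[A] M, ∀ x : L, g x = f x := by
  obtain ⟨s, hs⟩ := Module.projective_lifting_property L.mkQ LinearMap.id L.mkQ_surjective
  have hmem : ∀ x, x - s (L.mkQ x) ∈ L := fun x => by
    rw [← Submodule.Quotient.mk_eq_zero, ← L.mkQ_apply, map_sub, ← LinearMap.comp_apply, hs,
      LinearMap.id_apply, sub_self]
  refine ⟨f ∘ₗ LinearMap.codRestrict L (LinearMap.id - s ∘ₗ L.mkQ) hmem, fun x => ?_⟩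
  have hx : L.mkQ x = 0 := (Submodule.Quotient.mk_eq_zero L).mpr x.2
  refine congrArg f (Subtype.ext ?_)
  simp [hx]

theorem IsVonNeumannRegular.fpInjective {A : Type} [Ring A] (hA : IsVonNeumannRegular A)
    (M : Type) [AddCommGroup M] [Module A M] : FPInjective A M := by
  intro N _ _ L _ f
  have := hA.projective_of_finitePresentation (N ⧸ L)
  exact L.exists_extend_of_projective_quotient f

theorem isVonNeumannRegular_of_forall_fpInjective {A : Type} [Ring A]
    (h : ∀ (M : Type) [AddCommGroup M] [Module A M], FPInjective A M) :
    IsVonNeumannRegular A := by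
  intro a
  set L := span A {a}
  have hL : Module.FinitePresentation A (A ⧸ L) :=
    Module.finitePresentation_of_surjective L.mkQ L.mkQ_surjective
      (by rw [Submodule.ker_mkQ]; exact fg_span_singleton a)
  obtain ⟨g, hg⟩ := h L A L hL LinearMap.id
  obtain ⟨x, hx⟩ := mem_span_singleton.mp (g 1).2
  have hga : g a = a • g 1 := by rw [← map_smul, smul_eq_mul, mul_one]
  refine ⟨x, ?_⟩
  calc a = g a := by simpa using congrArg Subtype.val (hg ⟨a, mem_span_singleton_self a⟩).symm
    _ = a * (x * a) := by rw [hga, Submodule.coe_smul, ← hx, smul_eq_mul, smul_eq_mul]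
    _ = a * x * a := (mul_assoc a x a).symm

theorem isVonNeumannRegular_iff_forall_fpInjective {A : Type} [Ring A] :
    IsVonNeumannRegular A ↔ ∀ (M : Type) [AddCommGroup M] [Module A M], FPInjective A M :=
  ⟨fun hA M _ _ => hA.fpInjective M, isVonNeumannRegular_of_forall_fpInjective⟩

theorem isVonNeumannRegular_mulOpposite_iff {A : Type*} [Ring A] :
    IsVonNeumannRegular Aᵐᵒᵖ ↔ IsVonNeumannRegular A := by
  refine ⟨fun h a => ?_, fun h a => ?_⟩
  · obtain ⟨x, hx⟩ := h (MulOpposite.op a)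
    exact ⟨x.unop, by simpa [mul_assoc] using congrArg MulOpposite.unop hx⟩
  · obtain ⟨x, hx⟩ := h a.unop
    exact ⟨MulOpposite.op x, MulOpposite.unop_injective (by simpa [mul_assoc] using hx)⟩

/-- A ring `R` is von Neumann regular iff every right `R`-module
(i.e. left `Rᵐᵒᵖ`-module) is absolutely pure. -/
theorem stmt0 (R : Type) [Ring R] :
    (∀ a : R, ∃ x : R, a = a * x * a) ↔
      (∀ (M : Type) [AddCommGroup M] [Module Rᵐᵒᵖ M], FPInjective Rᵐᵒᵖ M) :=
  isVonNeumannRegular_mulOpposite_iff.symm.trans isVonNeumannRegular_iff_forall_fpInjective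
end

section
/- If every right simple module over a ring R is absolutely pure (R is a right SAP ring), then the Jacobson radical of R is zero. -/
/-- The Jacobson radical annihilates every simple module. -/
lemma jacobson_smul_eq_zero {A : Type} [Ring A] {S : Type} [AddCommGroup S] [Module A S]
    [IsSimpleModule A S] {a : A} (ha : a ∈ Ideal.jacobson (⊥ : Ideal A)) (s : S) :
    a • s = 0 := by
  by_cases hs : s = 0
  · simp [hs]
  · have hsurj : Function.Surjective (LinearMap.toSpanSingleton A S s) := by
      rw [← LinearMap.range_eq_top, ← LinearMap.span_singleton_eq_range]
      rcases eq_bot_or_eq_top (Submodule.span A {s}) with h | h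
      · exact absurd (Submodule.span_singleton_eq_bot.mp h) hs
      · exact h
    have hco : IsCoatom (LinearMap.ker (LinearMap.toSpanSingleton A S s)) :=
      LinearMap.isCoatom_ker_of_surjective hsurj
    have hmax : Ideal.IsMaximal (LinearMap.ker (LinearMap.toSpanSingleton A S s)) :=
      Ideal.isMaximal_def.mpr hco
    have : a ∈ LinearMap.ker (LinearMap.toSpanSingleton A S s) :=
      Ideal.mem_sInf.mp ha ⟨bot_le, hmax⟩
    simpa using this

/-- If every simple right `R`-module is absolutely pure (`R` is a right SAP ring),
then the Jacobson radical of `R` is zero. -/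
theorem stmt1 (R : Type) [Ring R]
    (hSAP : ∀ (S : Type) [AddCommGroup S] [Module Rᵐᵒᵖ S],
      IsSimpleModule Rᵐᵒᵖ S → FPInjective Rᵐᵒᵖ S) :
    Ideal.jacobson (⊥ : Ideal Rᵐᵒᵖ) = ⊥ := by
  set A := Rᵐᵒᵖ
  rw [eq_bot_iff]
  intro a ha
  rw [Ideal.mem_bot]
  by_contra hne
  -- the cyclic module L = span {a}
  set L : Submodule A A := Submodule.span A {a} with hL
  have haL : a ∈ L := Submodule.mem_span_singleton_self a
  set x₀ : L := ⟨a, haL⟩ with hx₀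
  have hx₀ne : x₀ ≠ 0 := by
    intro h
    exact hne (congrArg Subtype.val h)
  -- L is a finite module, hence its submodule lattice is coatomic
  haveI : Module.Finite A L := Module.Finite.span_singleton A a
  haveI : IsCoatomic (Submodule A L) :=
    CompleteLattice.coatomic_of_top_compact
      ((Submodule.fg_iff_compact _).mp (Module.finite_def.mp inferInstance))
  rcases eq_top_or_exists_le_coatom (⊥ : Submodule A L) with htop | ⟨K, hK, -⟩
  · exact hx₀ne (by rw [← Submodule.mem_bot (R := A), htop]; trivial)
  haveI hS : IsSimpleModule A (L ⧸ K) := isSimpleModule_iff_isCoatom.mpr hK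
  -- x₀ is not in K, since x₀ generates L
  have hx₀K : x₀ ∉ K := by
    intro hmem
    apply hK.1
    rw [eq_top_iff]
    rintro y -
    obtain ⟨r, hr⟩ := Submodule.mem_span_singleton.mp y.2
    have : y = r • x₀ := Subtype.ext hr.symm
    rw [this]
    exact K.smul_mem r hmem
  -- A ⧸ L is finitely presented
  have hFP : Module.FinitePresentation A (A ⧸ L) := by
    apply Module.finitePresentation_of_surjective L.mkQ L.mkQ_surjective
    rw [Submodule.ker_mkQ]
    exact Submodule.fg_span_singleton a
  -- extend the quotient map L → L ⧸ K to all of A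
  obtain ⟨g, hg⟩ := hSAP (L ⧸ K) hS A L hFP K.mkQ
  have h1 : g a = K.mkQ x₀ := hg x₀
  have h2 : g a = 0 := by
    have : g a = a • g 1 := by
      rw [← map_smul, smul_eq_mul, mul_one]
    rw [this]
    exact jacobson_smul_eq_zero ha (g 1)
  rw [h2] at h1
  exact hx₀K ((Submodule.Quotient.mk_eq_zero K).mp h1.symm)
end

section
/- If R is a right SAP ring, then every two-sided ideal I of R satisfies I = I^2. -/
/-- The product `I * J` of two-sided ideals, as the two-sided ideal generated by products. -/
def tsiMul {R : Type} [Ring R] (I J : TwoSidedIdeal R) : TwoSidedIdeal R :=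
  TwoSidedIdeal.span {z : R | ∃ a ∈ I, ∃ b ∈ J, z = a * b}


/-!
If `a ∈ I \ I²`, Zorn gives a right ideal `K ⊇ I²` maximal with `a ∉ K`; then every nonzero
submodule of `R/K` contains `a + K`, so `S = (a + K)R` is simple. Extending `aR → S, x ↦ x + K`
to `R` (possible since `R/aR` is finitely presented and `S` is FP-injective) shows
`a + K = g(1)a = aca + K` for some `c`, and `aca ∈ I² ⊆ K` forces `a ∈ K`.
-/

namespace Submodule

variable {A M : Type*} [Ring A] [AddCommGroup M] [Module A M]

theorem exists_le_maximal_notMem {N : Submodule A M} {x : M} (hx : x ∉ N) :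
    ∃ K, N ≤ K ∧ Maximal (fun K : Submodule A M => x ∉ K) K :=
  zorn_le_nonempty₀ {K | x ∉ K} (fun c hcx hc K hK =>
    ⟨sSup c, fun hmem => by
      obtain ⟨J, hJc, hJ⟩ := (mem_sSup_of_directed ⟨K, hK⟩ hc.directedOn).mp hmem
      exact hcx hJc hJ, fun _ => le_sSup⟩) N hx

theorem mk_mem_of_maximal_notMem {K : Submodule A M} {x : M}
    (hK : Maximal (fun K : Submodule A M => x ∉ K) K) {P : Submodule A (M ⧸ K)} (hP : P ≠ ⊥) :
    Quotient.mk x ∈ P := by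
  have hlt : K < P.comap K.mkQ := by
    refine lt_of_le_of_ne (le_comap_mkQ K P) fun h => hP ?_
    refine comap_injective_of_surjective K.mkQ_surjective ?_
    rw [← h, comap_bot, ker_mkQ]
  simpa using hK.not_prop_of_gt hlt

theorem isSimpleModule_span_mk_of_maximal_notMem {K : Submodule A M} {x : M}
    (hK : Maximal (fun K : Submodule A M => x ∉ K) K) :
    IsSimpleModule A (span A {(Quotient.mk x : M ⧸ K)}) := by
  rw [isSimpleModule_iff_isAtom]
  refine ⟨fun h => hK.prop ?_, fun P hP => by_contra fun hP0 => hP.not_ge ?_⟩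
  · simpa [Quotient.mk_eq_zero] using h
  · exact span_le.mpr (Set.singleton_subset_iff.mpr (mk_mem_of_maximal_notMem hK hP0))

end Submodule

theorem FPInjective.exists_smul_eq {A M : Type} [Ring A] [AddCommGroup M] [Module A M]
    (hM : FPInjective A M) (x : A) (f : Submodule.span A {x} →ₗ[A] M) :
    ∃ m : M, f ⟨x, Submodule.mem_span_singleton_self x⟩ = x • m := by
  have hfp : Module.FinitePresentation A (A ⧸ Submodule.span A {x}) :=
    Module.finitePresentation_of_free_of_surjective _ (Submodule.mkQ_surjective _)
      (by rw [Submodule.ker_mkQ]; exact Submodule.fg_span_singleton x)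
  obtain ⟨g, hg⟩ := hM A _ hfp f
  refine ⟨g 1, ?_⟩
  rw [← hg, ← map_smul, smul_eq_mul, mul_one]

/-- A ring `R` is right SAP iff `IsLeftSAP Rᵐᵒᵖ`. -/
def IsLeftSAP (A : Type) [Ring A] : Prop :=
  ∀ (S : Type) [AddCommGroup S] [Module A S], IsSimpleModule A S → FPInjective A S

namespace IsLeftSAP

variable {A : Type} [Ring A]

theorem sub_mul_mul_mem_of_maximal_notMem (hA : IsLeftSAP A) {K : Submodule A A} {x : A}
    (hK : Maximal (fun K : Submodule A A => x ∉ K) K) : ∃ c : A, x - x * c * x ∈ K := by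
  set S := Submodule.span A {(Submodule.Quotient.mk x : A ⧸ K)}
  have hxS : Submodule.span A {x} ≤ S.comap K.mkQ :=
    Submodule.span_le.mpr (Set.singleton_subset_iff.mpr (Submodule.mem_span_singleton_self _))
  obtain ⟨m, hm⟩ := (hA S (Submodule.isSimpleModule_span_mk_of_maximal_notMem hK)).exists_smul_eq
    x (K.mkQ.restrict hxS)
  obtain ⟨c, hc⟩ := Submodule.mem_span_singleton.mp m.2
  refine ⟨c, (Submodule.Quotient.eq K).mp ?_⟩
  have hx := congrArg Subtype.val hm
  simp only [LinearMap.coe_restrict_apply, Submodule.mkQ_apply, SetLike.val_smul, ← hc] at hx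
  rw [hx, ← Submodule.Quotient.mk_smul, ← Submodule.Quotient.mk_smul, smul_eq_mul, smul_eq_mul,
    mul_assoc]

theorem exists_mul_mul_notMem (hA : IsLeftSAP A) {T : Submodule A A} {x : A} (hx : x ∉ T) :
    ∃ c : A, x * c * x ∉ T := by
  obtain ⟨K, hTK, hK⟩ := Submodule.exists_le_maximal_notMem hx
  obtain ⟨c, hc⟩ := hA.sub_mul_mul_mem_of_maximal_notMem hK
  exact ⟨c, fun hT => hK.prop (by simpa using K.add_mem hc (hTK hT))⟩

end IsLeftSAP

theorem mul_mem_tsiMul {R : Type} [Ring R] {I J : TwoSidedIdeal R} {a b : R} (ha : a ∈ I)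
    (hb : b ∈ J) : a * b ∈ tsiMul I J :=
  TwoSidedIdeal.subset_span ⟨a, ha, b, hb, rfl⟩

theorem tsiMul_le_left {R : Type} [Ring R] (I J : TwoSidedIdeal R) : tsiMul I J ≤ I :=
  TwoSidedIdeal.span_le.mpr fun _ ⟨a, ha, b, _, hab⟩ => hab ▸ I.mul_mem_right a b ha

/-- If `R` is a right SAP ring then every two-sided ideal `I` of `R` satisfies `I = I²`. -/
theorem stmt2 (R : Type) [Ring R]
    (hSAP : ∀ (S : Type) [AddCommGroup S] [Module Rᵐᵒᵖ S],
      IsSimpleModule Rᵐᵒᵖ S → FPInjective Rᵐᵒᵖ S) :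
    ∀ I : TwoSidedIdeal R, I = tsiMul I I := by
  intro I
  refine le_antisymm (fun a ha => by_contra fun haI2 => ?_) (tsiMul_le_left I I)
  obtain ⟨c, hc⟩ := IsLeftSAP.exists_mul_mul_notMem hSAP (T := (tsiMul I I).asIdealOpposite) (x := .op a)
    (by simpa [TwoSidedIdeal.mem_asIdealOpposite] using haI2)
  refine hc (TwoSidedIdeal.mem_asIdealOpposite.mpr ?_)
  simpa [mul_assoc] using mul_mem_tsiMul ha (I.mul_mem_left c.unop a ha)
end

section
/- Let R be a ring. If every two-sided ideal I of R satisfies I = I^2 and R/P is von Neumann regular for every prime ideal P of R, then R is von Neumann regular. -/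
/-- A two-sided ideal `P` is prime if it is proper and `A * B ⊆ P` implies
`A ⊆ P` or `B ⊆ P` for two-sided ideals `A`, `B`. -/
def IsPrimeTSI {R : Type} [Ring R] (P : TwoSidedIdeal R) : Prop :=
  P ≠ ⊤ ∧ ∀ A B : TwoSidedIdeal R, tsiMul A B ≤ P → A ≤ P ∨ B ≤ P

lemma tsiMul_le_iff {R : Type} [Ring R] {A B P : TwoSidedIdeal R} :
    tsiMul A B ≤ P ↔ ∀ x ∈ A, ∀ y ∈ B, x * y ∈ P := by
  constructor
  · intro h x hx y hy
    exact h (TwoSidedIdeal.subset_span ⟨x, hx, y, hy, rfl⟩)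
  · intro h z hz
    rw [tsiMul] at hz
    rw [TwoSidedIdeal.mem_span_iff] at hz
    exact hz P (by rintro _ ⟨x, hx, y, hy, rfl⟩; exact h x hx y hy)

/-- If every two-sided ideal `I` of `R` satisfies `I = I²` and `R/P` is von Neumann regular
for every prime (two-sided) ideal `P`, then `R` is von Neumann regular. -/
theorem stmt3 (R : Type) [Ring R]
    (hidem : ∀ I : TwoSidedIdeal R, I = tsiMul I I)
    (hreg : ∀ P : TwoSidedIdeal R, IsPrimeTSI P →
      ∀ a : P.ringCon.Quotient, ∃ x : P.ringCon.Quotient, a = a * x * a) :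
    ∀ a : R, ∃ x : R, a = a * x * a := by
  intro a
  by_contra hcon
  push_neg at hcon
  -- the family of ideals modulo which `a` is not regular
  set F : Set (TwoSidedIdeal R) := {I | ∀ x : R, a - a * x * a ∉ I} with hFdef
  have hbot : (⊥ : TwoSidedIdeal R) ∈ F := by
    intro x hx
    rw [TwoSidedIdeal.mem_bot, sub_eq_zero] at hx
    exact hcon x hx
  -- Zorn's lemma
  obtain ⟨P, -, hPF, hPmax⟩ := zorn_le_nonempty₀ F (fun c hcF hchain I₀ hI₀ => by
    -- upper bound for a nonempty chain: the union
    refine ⟨TwoSidedIdeal.mk' (⋃ I ∈ c, (I : Set R))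
      (Set.mem_biUnion hI₀ (TwoSidedIdeal.zero_mem I₀))
      (fun {x y} hx hy => ?_) (fun {x} hx => ?_) (fun {x y} hy => ?_) (fun {x y} hx => ?_),
      ?_, fun J hJ => ?_⟩
    · obtain ⟨I, hI, hxI⟩ := Set.mem_iUnion₂.1 hx
      obtain ⟨J, hJ, hyJ⟩ := Set.mem_iUnion₂.1 hy
      rcases hchain.total hI hJ with h | h
      · exact Set.mem_biUnion hJ (TwoSidedIdeal.add_mem J (h hxI) hyJ)
      · exact Set.mem_biUnion hI (TwoSidedIdeal.add_mem I hxI (h hyJ))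
    · obtain ⟨I, hI, hxI⟩ := Set.mem_iUnion₂.1 hx
      exact Set.mem_biUnion hI (TwoSidedIdeal.neg_mem I hxI)
    · obtain ⟨I, hI, hyI⟩ := Set.mem_iUnion₂.1 hy
      exact Set.mem_biUnion hI (TwoSidedIdeal.mul_mem_left I _ _ hyI)
    · obtain ⟨I, hI, hxI⟩ := Set.mem_iUnion₂.1 hx
      exact Set.mem_biUnion hI (TwoSidedIdeal.mul_mem_right I _ _ hxI)
    · -- the union is in F
      intro x hx
      rw [TwoSidedIdeal.mem_mk'] at hx
      obtain ⟨I, hI, hxI⟩ := Set.mem_iUnion₂.1 hx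
      exact hcF hI x hxI
    · -- each member of the chain is below the union
      intro x hx
      rw [TwoSidedIdeal.mem_mk']
      exact Set.mem_biUnion hJ hx) ⊥ hbot
  -- P is prime
  have hPne : P ≠ ⊤ := by
    intro h
    exact hPF 0 (h ▸ trivial)
  have hPprime : IsPrimeTSI P := by
    refine ⟨hPne, fun A B hAB => ?_⟩
    by_contra hcon2
    push_neg at hcon2
    obtain ⟨hA, hB⟩ := hcon2
    -- P ⊔ A and P ⊔ B are strictly bigger than P, hence not in F
    have hsupA : P ⊔ A ∉ F := by
      intro hmem
      have : P ⊔ A ≤ P := hPmax hmem le_sup_left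
      exact hA (le_sup_right.trans this)
    have hsupB : P ⊔ B ∉ F := by
      intro hmem
      have : P ⊔ B ≤ P := hPmax hmem le_sup_left
      exact hB (le_sup_right.trans this)
    simp only [hFdef, Set.mem_setOf_eq, not_forall, not_not] at hsupA hsupB
    obtain ⟨x, hx⟩ := hsupA
    obtain ⟨y, hy⟩ := hsupB
    -- the element a - a(x + y - x a y)a lies in (P ⊔ A) ∩ (P ⊔ B)
    set u := a - a * (x + y - x * a * y) * a with hu
    have hu1 : u = (a - a * x * a) - (a - a * x * a) * (y * a) := by
      rw [hu]; noncomm_ring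
    have hu2 : u = (a - a * y * a) - (a * x) * (a - a * y * a) := by
      rw [hu]; noncomm_ring
    have huA : u ∈ P ⊔ A := by
      rw [hu1]
      exact TwoSidedIdeal.sub_mem _ hx (TwoSidedIdeal.mul_mem_right _ _ _ hx)
    have huB : u ∈ P ⊔ B := by
      rw [hu2]
      exact TwoSidedIdeal.sub_mem _ hy (TwoSidedIdeal.mul_mem_left _ _ _ hy)
    -- (P ⊔ A)(P ⊔ B) ≤ P
    have hmulP : tsiMul (P ⊔ A) (P ⊔ B) ≤ P := by
      rw [tsiMul_le_iff]
      intro s hs t ht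
      rw [TwoSidedIdeal.mem_sup] at hs ht
      obtain ⟨p, hp, a₀, ha₀, rfl⟩ := hs
      obtain ⟨q, hq, b₀, hb₀, rfl⟩ := ht
      have h1 : p * q ∈ P := TwoSidedIdeal.mul_mem_right _ _ _ hp
      have h2 : p * b₀ ∈ P := TwoSidedIdeal.mul_mem_right _ _ _ hp
      have h3 : a₀ * q ∈ P := TwoSidedIdeal.mul_mem_left _ _ _ hq
      have h4 : a₀ * b₀ ∈ P := (tsiMul_le_iff.1 hAB) a₀ ha₀ b₀ hb₀
      have : (p + a₀) * (q + b₀) = p * q + p * b₀ + a₀ * q + a₀ * b₀ := by noncomm_ring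
      rw [this]
      exact TwoSidedIdeal.add_mem _ (TwoSidedIdeal.add_mem _
        (TwoSidedIdeal.add_mem _ h1 h2) h3) h4
    -- intersection squared
    have hint : (P ⊔ A) ⊓ (P ⊔ B) ≤ P := by
      calc (P ⊔ A) ⊓ (P ⊔ B) = tsiMul ((P ⊔ A) ⊓ (P ⊔ B)) ((P ⊔ A) ⊓ (P ⊔ B)) :=
            hidem _
        _ ≤ tsiMul (P ⊔ A) (P ⊔ B) := by
            apply TwoSidedIdeal.span_mono
            rintro _ ⟨s, hs, t, ht, rfl⟩
            exact ⟨s, hs.1, t, ht.2, rfl⟩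
        _ ≤ P := hmulP
    exact hPF _ (hint ⟨huA, huB⟩)
  -- a is regular mod P: contradiction
  obtain ⟨xq, hxq⟩ := hreg P hPprime (a : P.ringCon.Quotient)
  obtain ⟨x, rfl⟩ := Quot.exists_rep xq
  have : P.ringCon a (a * x * a) := by
    rw [← RingCon.eq, RingCon.coe_mul, RingCon.coe_mul]
    exact hxq
  rw [TwoSidedIdeal.rel_iff] at this
  exact hPF x this
end

section
/- Let R be a ring such that for every simple right R-module T, the annihilator of T equals the annihilator of its injective hull E(T), and such that R/P is a right SAP ring for every right primitive ideal P. Then R is a right SAP ring. -/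
/-- Every simple left `A`-module is FP-injective. Applied to `A = Rᵐᵒᵖ` this says
that `R` is a right SAP ring. -/
def LeftSAP (A : Type) [Ring A] : Prop :=
  ∀ (S : Type) [AddCommGroup S] [Module A S], IsSimpleModule A S → FPInjective A S

/-- `i : T →ₗ[A] E` exhibits `E` as an injective hull of `T`: `E` is injective and
`i` embeds `T` as an essential submodule of `E`. -/
def IsInjectiveHull (A : Type) [Ring A] {T E : Type} [AddCommGroup T] [Module A T]
    [AddCommGroup E] [Module A E] (i : T →ₗ[A] E) : Prop :=
  Module.Injective A E ∧ Function.Injective i ∧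
    ∀ K : Submodule A E, K ≠ ⊥ → LinearMap.range i ⊓ K ≠ ⊥


/-! ### Auxiliary machinery -/

section Transfer
variable {A Q : Type} [Ring A] [Ring Q] (π : A →+* Q) (hπ : Function.Surjective π)

/-- Module structure over `Q` induced along a surjective ring hom whose kernel kills `M`. -/
noncomputable def modOfSurj (M : Type) [AddCommGroup M] [Module A M]
    (h0 : ∀ a : A, π a = 0 → ∀ m : M, a • m = 0) : Module Q M :=
  letI sm : SMul Q M := ⟨fun q m => (hπ q).choose • m⟩
  have key : ∀ (a : A) (m : M), (HSMul.hSMul (π a) m : M) = a • m := by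
    intro a m
    show (hπ (π a)).choose • m = a • m
    have h : π ((hπ (π a)).choose - a) = 0 := by
      rw [map_sub, (hπ (π a)).choose_spec, sub_self]
    have := h0 _ h m
    rwa [sub_smul, sub_eq_zero] at this
  { smul := sm.smul
    one_smul := fun m => by
      have : (1 : Q) = π 1 := (map_one π).symm
      rw [this]; rw [key]; exact one_smul A m
    mul_smul := fun q q' m => by
      obtain ⟨a, rfl⟩ := hπ q; obtain ⟨b, rfl⟩ := hπ q'
      rw [← map_mul, key, key, key, mul_smul]
    smul_zero := fun q => by obtain ⟨a, rfl⟩ := hπ q; rw [key]; exact smul_zero a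
    smul_add := fun q m m' => by obtain ⟨a, rfl⟩ := hπ q; rw [key, key, key]; exact smul_add a m m'
    add_smul := fun q q' m => by
      obtain ⟨a, rfl⟩ := hπ q; obtain ⟨b, rfl⟩ := hπ q'
      rw [← map_add, key, key, key]; exact add_smul a b m
    zero_smul := fun m => by
      have : (0 : Q) = π 0 := (map_zero π).symm
      rw [this, key]; exact zero_smul A m }

lemma modOfSurj_smul (M : Type) [AddCommGroup M] [Module A M]
    (h0 : ∀ a : A, π a = 0 → ∀ m : M, a • m = 0) (a : A) (m : M) :
    letI := modOfSurj π hπ M h0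
    π a • m = a • m := by
  letI := modOfSurj π hπ M h0
  show (hπ (π a)).choose • m = a • m
  have h : π ((hπ (π a)).choose - a) = 0 := by
    rw [map_sub, (hπ (π a)).choose_spec, sub_self]
  have := h0 _ h m
  rwa [sub_smul, sub_eq_zero] at this

lemma isSimpleModule_transfer (S : Type) [AddCommGroup S] [Module A S] [Module Q S]
    (hc : ∀ (a : A) (m : S), π a • m = a • m) (h : IsSimpleModule A S) :
    IsSimpleModule Q S := by
  haveI : Nontrivial S := IsSimpleModule.nontrivial A S
  rw [isSimpleModule_iff]
  constructor
  intro W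
  let W' : Submodule A S :=
    { carrier := W
      add_mem' := fun ha hb => W.add_mem ha hb
      zero_mem' := W.zero_mem
      smul_mem' := fun a x hx => by
        have := W.smul_mem (π a) hx
        rwa [hc] at this }
  rcases h.1.2 W' with h' | h'
  · left
    rw [eq_bot_iff]
    intro x hx
    have : x ∈ W' := hx
    rw [h'] at this
    simpa using this
  · right
    rw [eq_top_iff]
    intro x _
    have : x ∈ (⊤ : Submodule A S) := trivial
    rw [← h'] at this
    exact this

end Transfer

section Purity
variable {A Q : Type} [Ring A] [Ring Q]

lemma purity_step (π : A →+* Q) (hπ : Function.Surjective π)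
    (S E : Type) [AddCommGroup S] [AddCommGroup E]
    [Module A S] [Module A E] [Module Q S] [Module Q E]
    (hcS : ∀ (a : A) (m : S), π a • m = a • m)
    (hcE : ∀ (a : A) (m : E), π a • m = a • m)
    (hS : FPInjective Q S) (hE : Module.Injective A E)
    (i : S →ₗ[A] E) (hi : Function.Injective i) :
    FPInjective A S := by
  classical
  intro N _ _ L hfp f
  -- i as a Q-linear map
  let iQ : S →ₗ[Q] E :=
    { toFun := i
      map_add' := i.map_add
      map_smul' := fun q x => by
        obtain ⟨a, rfl⟩ := hπ q
        simp only [RingHom.id_apply]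
        rw [hcS, hcE, i.map_smul] }
  -- extend i ∘ f to all of N
  obtain ⟨gE, hgE⟩ := hE.out L.subtype (Submodule.injective_subtype L) (i.comp f)
  -- the cokernel C of i
  set SA : Submodule A E := LinearMap.range i with hSAdef
  let C := E ⧸ SA
  let πC : E →ₗ[A] C := SA.mkQ
  have h0C : ∀ a : A, π a = 0 → ∀ c : C, a • c = 0 := by
    intro a ha c
    obtain ⟨e, rfl⟩ := SA.mkQ_surjective c
    show a • SA.mkQ e = 0
    rw [← map_smul, ← hcE, ha, zero_smul, map_zero]
  letI : Module Q C := modOfSurj π hπ C h0C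
  have hcC : ∀ (a : A) (c : C), π a • c = a • c := modOfSurj_smul π hπ C h0C
  -- F = N / L  and  Fbar = F / (ker π) F
  let F := N ⧸ L
  have hkerg : L ≤ LinearMap.ker (πC.comp gE) := by
    intro x hx
    have : gE x = i (f ⟨x, hx⟩) := hgE ⟨x, hx⟩
    simp only [LinearMap.mem_ker, LinearMap.comp_apply, this]
    exact (Submodule.Quotient.mk_eq_zero SA).mpr ⟨f ⟨x, hx⟩, rfl⟩
  let gbar : F →ₗ[A] C := L.liftQ (πC.comp gE) hkerg
  let T : Set F := {m | ∃ p : A, ∃ y : F, π p = 0 ∧ p • y = m}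
  let IF : Submodule A F := Submodule.span A T
  let Fbar := F ⧸ IF
  let pF : F →ₗ[A] Fbar := IF.mkQ
  have h0F : ∀ a : A, π a = 0 → ∀ m : Fbar, a • m = 0 := by
    intro a ha m
    obtain ⟨y, rfl⟩ := IF.mkQ_surjective m
    show a • IF.mkQ y = 0
    rw [← map_smul]
    exact (Submodule.Quotient.mk_eq_zero IF).mpr (Submodule.subset_span ⟨a, y, ha, rfl⟩)
  letI : Module Q Fbar := modOfSurj π hπ Fbar h0F
  have hcF : ∀ (a : A) (m : Fbar), π a • m = a • m := modOfSurj_smul π hπ Fbar h0F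
  -- gbar kills IF
  have hIFker : IF ≤ LinearMap.ker gbar := by
    rw [Submodule.span_le]
    rintro m ⟨p, y, hp, rfl⟩
    simp only [SetLike.mem_coe, LinearMap.mem_ker, map_smul]
    rw [← hcC, hp, zero_smul]
  let gbar' : Fbar →ₗ[A] C := IF.liftQ gbar hIFker
  let gbarQ : Fbar →ₗ[Q] C :=
    { toFun := gbar'
      map_add' := gbar'.map_add
      map_smul' := fun q x => by
        obtain ⟨a, rfl⟩ := hπ q
        simp only [RingHom.id_apply]
        rw [hcF, hcC, gbar'.map_smul] }
  let πCQ : E →ₗ[Q] C :=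
    { toFun := πC
      map_add' := πC.map_add
      map_smul' := fun q x => by
        obtain ⟨a, rfl⟩ := hπ q
        simp only [RingHom.id_apply]
        rw [hcE, hcC, πC.map_smul] }
  -- Fbar is finitely presented over Q
  haveI : Module.FinitePresentation A F := hfp
  obtain ⟨n, l, hl⟩ := Module.Finite.exists_fin' A F
  obtain ⟨G, hG⟩ := Module.FinitePresentation.fg_ker l hl
  let m : Fin n → Fbar := fun i => pF (l (Pi.single i 1))
  let φ : (Fin n → Q) →ₗ[Q] Fbar :=
    ∑ i, (LinearMap.toSpanSingleton Q Fbar (m i)).comp (LinearMap.proj i)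
  have hφ : ∀ w : Fin n → Q, φ w = ∑ i, w i • m i := by
    intro w
    simp [φ, LinearMap.sum_apply]
  have hv : ∀ v : Fin n → A, (∑ i, v i • (Pi.single i (1:A) : Fin n → A)) = v := by
    intro v; funext j
    simp only [Finset.sum_apply, Pi.smul_apply, Pi.single_apply, smul_eq_mul, mul_ite, mul_one,
      mul_zero]
    simp
  have hkey : ∀ v : Fin n → A, φ (fun i => π (v i)) = pF (l v) := by
    intro v
    rw [hφ]
    have : ∀ i, π (v i) • m i = v i • m i := fun i => hcF (v i) (m i)
    rw [Finset.sum_congr rfl (fun i _ => this i)]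
    have : ∑ i, v i • m i = pF (l (∑ i, v i • (Pi.single i (1:A) : Fin n → A))) := by
      rw [map_sum, map_sum]
      exact Finset.sum_congr rfl (fun i _ => by rw [map_smul, map_smul])
    rw [this, hv]
  have hφsurj : Function.Surjective φ := by
    intro z
    obtain ⟨y, rfl⟩ := IF.mkQ_surjective z
    obtain ⟨v, rfl⟩ := hl y
    exact ⟨fun i => π (v i), hkey v⟩
  have hkerφ : LinearMap.ker φ = Submodule.span Q ((fun v : Fin n → A => fun i => π (v i)) '' ↑G) := by
    apply le_antisymm
    · intro w hw
      -- w = π ∘ v for some v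
      have hΦsurj : ∃ v : Fin n → A, (fun i => π (v i)) = w :=
        ⟨fun i => (hπ (w i)).choose, funext fun i => (hπ (w i)).choose_spec⟩
      obtain ⟨v, rfl⟩ := hΦsurj
      have hlv : l v ∈ IF := by
        have := hkey v
        rw [LinearMap.mem_ker] at hw
        rw [hw] at this
        exact (Submodule.Quotient.mk_eq_zero IF).mp this.symm
      -- lift membership in IF
      have hlift : ∀ z ∈ IF, ∃ u : Fin n → A, l u = z ∧ ∀ i, π (u i) = 0 := by
        intro z hz
        induction hz using Submodule.span_induction with
        | mem x hx =>
          obtain ⟨p, y, hp, rfl⟩ := hx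
          obtain ⟨b, rfl⟩ := hl y
          exact ⟨p • b, by rw [map_smul], fun i => by
            simp only [Pi.smul_apply, smul_eq_mul, map_mul, hp, zero_mul]⟩
        | zero => exact ⟨0, by simp⟩
        | add x y _ _ hx hy =>
          obtain ⟨u, hu, hu0⟩ := hx
          obtain ⟨u', hu', hu0'⟩ := hy
          exact ⟨u + u', by rw [map_add, hu, hu'], fun i => by
            simp [map_add, hu0 i, hu0' i]⟩
        | smul a x _ hx =>
          obtain ⟨u, hu, hu0⟩ := hx
          exact ⟨a • u, by rw [map_smul, hu], fun i => by
            simp only [Pi.smul_apply, smul_eq_mul, map_mul, hu0 i, mul_zero]⟩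
      obtain ⟨u, hu, hu0⟩ := hlift (l v) hlv
      have hvu : v - u ∈ LinearMap.ker l := by
        rw [LinearMap.mem_ker, map_sub, hu, sub_self]
      rw [← hG] at hvu
      have himg : ∀ k ∈ Submodule.span A (↑G : Set (Fin n → A)),
          (fun i => π (k i)) ∈ Submodule.span Q ((fun v : Fin n → A => fun i => π (v i)) '' ↑G) := by
        intro k hk
        induction hk using Submodule.span_induction with
        | mem x hx => exact Submodule.subset_span ⟨x, hx, rfl⟩
        | zero =>
          have h00 : (fun i => π ((0 : Fin n → A) i)) = (0 : Fin n → Q) := by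
            funext i; simp
          rw [h00]; exact Submodule.zero_mem _
        | add x y _ _ hx hy =>
          have : (fun i => π ((x + y) i)) = (fun i => π (x i)) + (fun i => π (y i)) := by
            funext i; simp [map_add]
          rw [this]; exact Submodule.add_mem _ hx hy
        | smul a x _ hx =>
          have : (fun i => π ((a • x) i)) = π a • (fun i => π (x i)) := by
            funext i; simp [map_mul]
          rw [this]; exact Submodule.smul_mem _ _ hx
      have := himg (v - u) hvu
      have heq : (fun i => π ((v - u) i)) = fun i => π (v i) := by
        funext i; simp [map_sub, hu0 i]
      rwa [heq] at this
    · rw [Submodule.span_le]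
      rintro w ⟨k, hk, rfl⟩
      have hkker : k ∈ LinearMap.ker l := hG ▸ Submodule.subset_span hk
      simp only [SetLike.mem_coe, LinearMap.mem_ker]
      rw [hkey k, LinearMap.mem_ker.mp hkker, map_zero]
  have hfgker : (LinearMap.ker φ).FG := by
    rw [hkerφ]
    exact ⟨G.image (fun v : Fin n → A => fun i => π (v i)), by rw [Finset.coe_image]⟩
  haveI hFbarFP : Module.FinitePresentation Q Fbar :=
    Module.finitePresentation_of_free_of_surjective φ hφsurj hfgker
  -- the pullback X of E -> C <- Fbar
  let D : (E × Fbar) →ₗ[Q] C :=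
    πCQ.comp (LinearMap.fst Q E Fbar) - gbarQ.comp (LinearMap.snd Q E Fbar)
  let X : Submodule Q (E × Fbar) := LinearMap.ker D
  let snd' : X →ₗ[Q] Fbar := (LinearMap.snd Q E Fbar).comp X.subtype
  have hXmem : ∀ x : X, πC ((x : E × Fbar).1) = gbar' ((x : E × Fbar).2) := by
    intro x
    have hx := x.2
    simp only [X, LinearMap.mem_ker, D, LinearMap.sub_apply, LinearMap.comp_apply,
      LinearMap.fst_apply, LinearMap.snd_apply] at hx
    exact sub_eq_zero.mp hx
  have hsnd'surj : Function.Surjective snd' := by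
    intro u
    obtain ⟨e, he⟩ := SA.mkQ_surjective (gbar' u)
    refine ⟨⟨(e, u), ?_⟩, rfl⟩
    show D (e, u) = 0
    simp only [D, LinearMap.sub_apply, LinearMap.comp_apply, LinearMap.fst_apply,
      LinearMap.snd_apply]
    show πC e - gbar' u = 0
    rw [he, sub_self]
  let K : Submodule Q X := LinearMap.ker snd'
  have hKmem : ∀ k : X, k ∈ K → (k : E × Fbar).1 ∈ SA := by
    intro k hk
    have h2 : (k : E × Fbar).2 = 0 := hk
    have h3 := hXmem k
    rw [h2, map_zero] at h3
    exact (Submodule.Quotient.mk_eq_zero SA).mp h3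
  let SQ : Submodule Q E := LinearMap.range iQ
  let eqi : S ≃ₗ[Q] SQ := LinearEquiv.ofInjective iQ hi
  let val1 : K →ₗ[Q] E := (LinearMap.fst Q E Fbar).comp (X.subtype.comp K.subtype)
  have hval1 : ∀ k : K, val1 k ∈ SQ := by
    intro k
    obtain ⟨s, hs⟩ := hKmem (k : X) k.2
    exact ⟨s, hs⟩
  let fK : K →ₗ[Q] S := eqi.symm.toLinearMap.comp (val1.codRestrict SQ hval1)
  have hfK : ∀ k : K, i (fK k) = val1 k := by
    intro k
    show iQ (fK k) = val1 k
    have h1 : iQ (eqi.symm ⟨val1 k, hval1 k⟩) = ((eqi (eqi.symm ⟨val1 k, hval1 k⟩)) : E) :=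
      (LinearEquiv.ofInjective_apply iQ _).symm
    have h2 : eqi (eqi.symm ⟨val1 k, hval1 k⟩) = ⟨val1 k, hval1 k⟩ :=
      eqi.apply_symm_apply _
    show iQ (eqi.symm ⟨val1 k, hval1 k⟩) = val1 k
    rw [h1, h2]
  -- X ⧸ K is f.p. over Q
  let ee : (X ⧸ K) →ₗ[Q] Fbar := K.liftQ snd' (le_refl _)
  have hee_mk : ∀ y : X, ee (K.mkQ y) = snd' y := fun y => by
    have h := LinearMap.congr_fun (Submodule.liftQ_mkQ K snd' (le_refl _)) y
    simpa only [LinearMap.comp_apply] using h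
  have heesurj : Function.Surjective ee := by
    intro u
    obtain ⟨x, hx⟩ := hsnd'surj u
    exact ⟨K.mkQ x, by rw [hee_mk x]; exact hx⟩
  have heeinj : Function.Injective ee := by
    rw [← LinearMap.ker_eq_bot]
    exact Submodule.ker_liftQ_eq_bot _ _ _ (le_refl _)
  let eeEquiv : (X ⧸ K) ≃ₗ[Q] Fbar := LinearEquiv.ofBijective ee ⟨heeinj, heesurj⟩
  haveI hXKfp : Module.FinitePresentation Q (X ⧸ K) := by
    apply Module.finitePresentation_of_surjective eeEquiv.symm.toLinearMap
      eeEquiv.symm.surjective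
    rw [LinearMap.ker_eq_bot.mpr eeEquiv.symm.injective]
    exact Submodule.fg_bot
  -- apply FP-injectivity of S over Q
  obtain ⟨r, hr⟩ := hS X K hXKfp fK
  -- build the lift h' : Fbar → E
  let h'' : X →ₗ[Q] E := (LinearMap.fst Q E Fbar).comp X.subtype - iQ.comp r
  have hKh : K ≤ LinearMap.ker h'' := by
    intro k hk
    have h1 : r k = fK ⟨k, hk⟩ := hr ⟨k, hk⟩
    simp only [LinearMap.mem_ker, h'', LinearMap.sub_apply, LinearMap.comp_apply,
      LinearMap.fst_apply]
    rw [h1]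
    have h2 : iQ (fK ⟨k, hk⟩) = val1 ⟨k, hk⟩ := hfK ⟨k, hk⟩
    rw [h2]
    exact sub_self _
  let h'0 : (X ⧸ K) →ₗ[Q] E := K.liftQ h'' hKh
  have hh0_mk : ∀ y : X, h'0 (K.mkQ y) = h'' y := fun y => by
    have h := LinearMap.congr_fun (Submodule.liftQ_mkQ K h'' hKh) y
    simpa only [LinearMap.comp_apply] using h
  let h' : Fbar →ₗ[Q] E := h'0.comp eeEquiv.symm.toLinearMap
  have hπh' : ∀ u : Fbar, πC (h' u) = gbar' u := by
    intro u
    obtain ⟨x, hx⟩ := hsnd'surj u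
    have hmk : eeEquiv (K.mkQ x) = u := by
      show ee (K.mkQ x) = u
      rw [hee_mk x]; exact hx
    have hsymm : eeEquiv.symm u = K.mkQ x := by rw [← hmk, LinearEquiv.symm_apply_apply]
    show πC (h'0 (eeEquiv.symm u)) = gbar' u
    rw [hsymm, hh0_mk x]
    show πC ((x : E × Fbar).1 - i (r x)) = gbar' u
    rw [map_sub]
    have hz : πC (i (r x)) = 0 := (Submodule.Quotient.mk_eq_zero SA).mpr ⟨r x, rfl⟩
    rw [hz, sub_zero, hXmem x]
    have : (x : E × Fbar).2 = u := hx
    rw [this]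
  -- back to A-linear world
  let h'A : Fbar →ₗ[A] E :=
    { toFun := h'
      map_add' := h'.map_add
      map_smul' := fun a x => by
        simp only [RingHom.id_apply]
        rw [← hcF, ← hcE]
        exact h'.map_smul (π a) x }
  let Gm : N →ₗ[A] E := gE - h'A.comp (pF.comp L.mkQ)
  have hGm : ∀ x : N, Gm x ∈ SA := by
    intro x
    have hπG : πC (Gm x) = 0 := by
      show πC (gE x - h'A (pF (L.mkQ x))) = 0
      rw [map_sub]
      have h1 : πC (gE x) = gbar (L.mkQ x) := by
        have h := LinearMap.congr_fun (Submodule.liftQ_mkQ L (πC.comp gE) hkerg) x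
        simp only [LinearMap.comp_apply] at h
        exact h.symm
      have h2 : πC (h'A (pF (L.mkQ x))) = gbar' (pF (L.mkQ x)) := hπh' _
      have h3 : gbar' (pF (L.mkQ x)) = gbar (L.mkQ x) := by
        have h := LinearMap.congr_fun (Submodule.liftQ_mkQ IF gbar hIFker) (L.mkQ x)
        simpa only [LinearMap.comp_apply] using h
      rw [h1, h2, h3, sub_self]
    exact (Submodule.Quotient.mk_eq_zero SA).mp hπG
  let eqiA : S ≃ₗ[A] SA := LinearEquiv.ofInjective i hi
  refine ⟨eqiA.symm.toLinearMap.comp (Gm.codRestrict SA hGm), ?_⟩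
  intro x
  have hx0 : L.mkQ (x : N) = 0 := (Submodule.Quotient.mk_eq_zero L).mpr x.2
  have hGx : Gm x = i (f x) := by
    show gE x - h'A (pF (L.mkQ x)) = i (f x)
    rw [hx0, map_zero, map_zero, sub_zero]
    exact hgE x
  show eqiA.symm ⟨Gm (x : N), hGm x⟩ = f x
  rw [LinearEquiv.symm_apply_eq]
  apply Subtype.ext
  show Gm (x : N) = ((eqiA (f x) : SA) : E)
  rw [LinearEquiv.ofInjective_apply i]
  exact hGx

end Purity

section Hull

variable (A : Type) [Ring A]

theorem exists_injective_hull (S : Type) [AddCommGroup S] [Module A S] :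
    ∃ (E : Type) (_ : AddCommGroup E) (_ : Module A E) (i : S →ₗ[A] E),
      IsInjectiveHull A i := by
  classical
  -- Step 1: embed S into an injective module I
  haveI : CategoryTheory.EnoughInjectives (ModuleCat.{0} A) := inferInstance
  set SM : ModuleCat.{0} A := ModuleCat.of A S with hSM
  let IM : ModuleCat.{0} A := CategoryTheory.Injective.under SM
  haveI hIMinj : CategoryTheory.Injective IM := CategoryTheory.Injective.injective_under SM
  let I : Type := IM
  letI : AddCommGroup I := inferInstanceAs (AddCommGroup IM)
  letI : Module A I := inferInstanceAs (Module A IM)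
  have hI : Module.Injective A I := by
    have := Module.injective_module_of_injective_object (R := A) (M := I)
      (inj := by exact hIMinj)
    exact this
  let j : S →ₗ[A] I := (CategoryTheory.Injective.ι SM).hom
  have hj : Function.Injective j := by
    have := CategoryTheory.Injective.ι_mono SM
    exact (ModuleCat.mono_iff_injective (CategoryTheory.Injective.ι SM)).mp this
  -- Step 2: Zorn, maximal essential extension of Sj = range j inside I
  set Sj : Submodule A I := LinearMap.range j with hSjdef
  let ess : Submodule A I → Prop := fun M =>
    Sj ≤ M ∧ ∀ x ∈ M, x ≠ 0 → ∃ r : A, r • x ∈ Sj ∧ r • x ≠ 0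
  obtain ⟨E₀, hSjE₀, hE₀max⟩ := zorn_le_nonempty₀ {M | ess M}
    (fun c hcs hc y hy => by
      refine ⟨sSup c, ⟨?_, ?_⟩, fun z hz => le_sSup hz⟩
      · exact le_trans (hcs hy).1 (le_sSup hy)
      · intro x hx hx0
        obtain ⟨M, hMc, hxM⟩ := (Submodule.mem_sSup_of_directed ⟨y, hy⟩ hc.directedOn).mp hx
        exact (hcs hMc).2 x hxM hx0)
    Sj ⟨le_refl _, fun x hx hx0 => ⟨1, by rwa [one_smul], by rwa [one_smul]⟩⟩
  have hE₀ess : ess E₀ := hE₀max.prop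
  -- Step 3: Zorn, a maximal complement Cc of E₀
  obtain ⟨Cc, -, hCmax⟩ := zorn_le_nonempty₀ {C : Submodule A I | C ⊓ E₀ = ⊥}
    (fun c hcs hc y hy => by
      refine ⟨sSup c, ?_, fun z hz => le_sSup hz⟩
      show sSup c ⊓ E₀ = ⊥
      rw [eq_bot_iff]
      intro x hx
      have hx1 := (Submodule.mem_inf.mp hx).1
      have hx2 := (Submodule.mem_inf.mp hx).2
      obtain ⟨M, hMc, hxM⟩ := (Submodule.mem_sSup_of_directed ⟨y, hy⟩ hc.directedOn).mp hx1
      have : x ∈ M ⊓ E₀ := Submodule.mem_inf.mpr ⟨hxM, hx2⟩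
      rw [hcs hMc] at this
      exact this)
    ⊥ (by simp)
  have hCc : Cc ⊓ E₀ = ⊥ := hCmax.prop
  -- Step 4: the map p : E₀ → I/Cc is injective with essential image
  let p : ↥E₀ →ₗ[A] (I ⧸ Cc) := Cc.mkQ.comp E₀.subtype
  have hp_inj : Function.Injective p := by
    intro a b hab
    have h1 : Cc.mkQ ((a : I) - (b : I)) = 0 := by
      rw [map_sub, sub_eq_zero]; exact hab
    have h2 : (a : I) - (b : I) ∈ Cc := (Submodule.Quotient.mk_eq_zero Cc).mp h1
    have h3 : (a : I) - (b : I) ∈ Cc ⊓ E₀ :=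
      Submodule.mem_inf.mpr ⟨h2, sub_mem a.2 b.2⟩
    rw [hCc] at h3
    have : (a : I) - (b : I) = 0 := h3
    exact Subtype.ext (by rwa [sub_eq_zero] at this)
  let P0 : Submodule A (I ⧸ Cc) := LinearMap.range p
  have hP0ess : ∀ y : I ⧸ Cc, y ≠ 0 → ∃ a : A, a • y ∈ P0 ∧ a • y ≠ 0 := by
    intro y hy
    by_cases hK : (Submodule.span A {y}).comap Cc.mkQ ⊓ E₀ = ⊥
    · exfalso
      have hCle : Cc ≤ (Submodule.span A {y}).comap Cc.mkQ := by
        intro c hc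
        simp only [Submodule.mem_comap]
        rw [show Cc.mkQ c = 0 from (Submodule.Quotient.mk_eq_zero Cc).mpr hc]
        exact Submodule.zero_mem _
      have hKC := hCmax.2 hK hCle
      obtain ⟨w, hw⟩ := Cc.mkQ_surjective y
      have hwK : w ∈ (Submodule.span A {y}).comap Cc.mkQ := by
        simp only [Submodule.mem_comap, hw]
        exact Submodule.mem_span_singleton_self y
      apply hy
      rw [← hw]
      exact (Submodule.Quotient.mk_eq_zero Cc).mpr (hKC hwK)
    · obtain ⟨x, hx, hx0⟩ := (Submodule.ne_bot_iff _).mp hK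
      have hx1 : Cc.mkQ x ∈ Submodule.span A {y} := (Submodule.mem_inf.mp hx).1
      have hx2 : x ∈ E₀ := (Submodule.mem_inf.mp hx).2
      obtain ⟨a, ha⟩ := Submodule.mem_span_singleton.mp hx1
      refine ⟨a, ⟨⟨x, hx2⟩, ha.symm⟩, ?_⟩
      intro h0
      rw [h0] at ha
      have : x ∈ Cc := (Submodule.Quotient.mk_eq_zero Cc).mp ha.symm
      have : x ∈ Cc ⊓ E₀ := Submodule.mem_inf.mpr ⟨this, hx2⟩
      rw [hCc] at this
      exact hx0 this
  -- Step 5: extend the inverse of p over I/Cc using injectivity of I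
  let eqv : ↥E₀ ≃ₗ[A] ↥P0 := LinearEquiv.ofInjective p hp_inj
  let ψ : ↥P0 →ₗ[A] I := E₀.subtype.comp eqv.symm.toLinearMap
  obtain ⟨h, hh⟩ := hI.out P0.subtype (Submodule.injective_subtype P0) ψ
  have hhe : ∀ e : ↥E₀, h (p e) = (e : I) := by
    intro e
    have h1 : ((eqv e : ↥P0) : I ⧸ Cc) = p e := LinearEquiv.ofInjective_apply p e
    have h2 : h (P0.subtype (eqv e)) = ψ (eqv e) := hh (eqv e)
    have h3 : ψ (eqv e) = (e : I) := by
      show E₀.subtype (eqv.symm (eqv e)) = (e : I)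
      rw [eqv.symm_apply_apply]
      rfl
    have h4 : (P0.subtype (eqv e) : I ⧸ Cc) = p e := h1
    rw [← h4, h2, h3]
  have hhinj : ∀ y : I ⧸ Cc, h y = 0 → y = 0 := by
    intro y h0
    by_contra hy
    obtain ⟨a, haP, ha0⟩ := hP0ess y hy
    obtain ⟨e, he⟩ := haP
    have h1 : h (a • y) = (e : I) := by rw [← he, hhe]
    rw [map_smul, h0, smul_zero] at h1
    have h2 : p e = 0 := by
      have : e = (0 : ↥E₀) := Subtype.ext h1.symm
      rw [this, map_zero]
    rw [he] at h2
    exact ha0 h2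
  -- Step 6: ρ = h ∘ mkQ has range E₀ by maximality
  let ρ : I →ₗ[A] I := h.comp Cc.mkQ
  have hρE₀ : ∀ e ∈ E₀, ρ e = e := by
    intro e he
    show h (Cc.mkQ e) = e
    have : Cc.mkQ e = p ⟨e, he⟩ := rfl
    rw [this, hhe]
  have hE₀le : E₀ ≤ LinearMap.range ρ := fun e he => ⟨e, hρE₀ e he⟩
  have hessM : ess (LinearMap.range ρ) := by
    constructor
    · exact le_trans hE₀ess.1 hE₀le
    · intro x hx hx0
      obtain ⟨w, hw⟩ := hx
      set y : I ⧸ Cc := Cc.mkQ w with hydef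
      have hxy : h y = x := hw
      have hy0 : y ≠ 0 := by
        intro h0
        rw [h0, map_zero] at hxy
        exact hx0 hxy.symm
      obtain ⟨a, haP, ha0⟩ := hP0ess y hy0
      obtain ⟨e, he⟩ := haP
      have hax : a • x ∈ E₀ := by
        rw [← hxy, ← map_smul, ← he, hhe]
        exact e.2
      have hax0 : a • x ≠ 0 := by
        intro h0
        rw [← hxy, ← map_smul] at h0
        exact ha0 (hhinj _ h0)
      obtain ⟨b, hb, hb0⟩ := hE₀ess.2 (a • x) hax hax0
      exact ⟨b * a, by rwa [mul_smul], by rwa [mul_smul]⟩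
  have hrange : LinearMap.range ρ ≤ E₀ := hE₀max.2 hessM hE₀le
  have hmem_ρ : ∀ x : I, ρ x ∈ E₀ := fun x => hrange ⟨x, rfl⟩
  -- Step 7: conclude
  have hjE₀ : ∀ s : S, j s ∈ E₀ := fun s => hSjE₀ ⟨s, rfl⟩
  refine ⟨↥E₀, inferInstance, inferInstance, j.codRestrict E₀ hjE₀, ?_, ?_, ?_⟩
  · constructor
    intro X Y _ _ _ _ fXY hf g
    obtain ⟨H, hH⟩ := hI.out fXY hf (E₀.subtype.comp g)
    refine ⟨(ρ.codRestrict E₀ hmem_ρ).comp H, fun x => ?_⟩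
    apply Subtype.ext
    show ρ (H (fXY x)) = ((g x : ↥E₀) : I)
    rw [hH x]
    exact hρE₀ _ (g x).2
  · intro a b hab
    exact hj (congrArg Subtype.val hab)
  · intro K hK
    obtain ⟨x, hxK, hx0⟩ := (Submodule.ne_bot_iff K).mp hK
    have hx0' : (x : I) ≠ 0 := fun h0 => hx0 (Subtype.ext h0)
    obtain ⟨r, hrS, hr0⟩ := hE₀ess.2 (x : I) x.2 hx0'
    rw [Submodule.ne_bot_iff]
    obtain ⟨s, hs⟩ := hrS
    refine ⟨r • x, Submodule.mem_inf.mpr ⟨⟨s, ?_⟩, K.smul_mem r hxK⟩, ?_⟩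
    · apply Subtype.ext
      show j s = ((r • x : ↥E₀) : I)
      rw [hs]
      rfl
    · intro h0
      apply hr0
      have : ((r • x : ↥E₀) : I) = 0 := by rw [h0]; rfl
      exact this

end Hull


section Main
variable (A : Type) [Ring A]

noncomputable def annTSI (S : Type) [AddCommGroup S] [Module A S] : TwoSidedIdeal A :=
  TwoSidedIdeal.mk' {a : A | ∀ m : S, a • m = 0}
    (fun m => zero_smul A m)
    (fun {x y} hx hy m => by rw [add_smul, hx m, hy m, add_zero])
    (fun {x} hx m => by rw [neg_smul, hx m, neg_zero])
    (fun {x y} hy m => by rw [mul_smul, hy m, smul_zero])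
    (fun {x y} hx m => by rw [mul_smul]; exact hx (y • m))

lemma annTSI_asIdeal (S : Type) [AddCommGroup S] [Module A S] :
    (annTSI A S).asIdeal = Module.annihilator A S := by
  ext a
  rw [TwoSidedIdeal.mem_asIdeal, Module.mem_annihilator]
  exact TwoSidedIdeal.mem_mk' _ _ _ _ _ _ a

lemma annTSI_mk'_eq_zero (S : Type) [AddCommGroup S] [Module A S] (a : A) :
    (annTSI A S).ringCon.mk' a = 0 ↔ ∀ m : S, a • m = 0 := by
  rw [show ((annTSI A S).ringCon.mk' a = 0) ↔ (annTSI A S).ringCon a 0 from RingCon.eq _]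
  rw [show (annTSI A S).ringCon a 0 ↔ a - 0 ∈ annTSI A S from TwoSidedIdeal.rel_iff _ a 0]
  rw [sub_zero]
  exact TwoSidedIdeal.mem_mk' _ _ _ _ _ _ a

lemma annTSI_mk'_surjective (S : Type) [AddCommGroup S] [Module A S] :
    Function.Surjective (annTSI A S).ringCon.mk' := fun q =>
  Quotient.inductionOn' q (fun a => ⟨a, rfl⟩)

end Main


/-- If `Ann(T) = Ann(E(T))` for every simple right `R`-module `T` and `R/P` is a right SAP
ring for every right primitive ideal `P` (the annihilator of a simple right module, as a
two-sided ideal), then `R` is a right SAP ring. -/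
theorem stmt4 (R : Type) [Ring R]
    (hann : ∀ (T : Type) [AddCommGroup T] [Module Rᵐᵒᵖ T], IsSimpleModule Rᵐᵒᵖ T →
      ∀ (E : Type) [AddCommGroup E] [Module Rᵐᵒᵖ E] (i : T →ₗ[Rᵐᵒᵖ] E),
        IsInjectiveHull Rᵐᵒᵖ i →
          Module.annihilator Rᵐᵒᵖ T = Module.annihilator Rᵐᵒᵖ E)
    (hquot : ∀ (T : Type) [AddCommGroup T] [Module Rᵐᵒᵖ T], IsSimpleModule Rᵐᵒᵖ T →
      ∀ P : TwoSidedIdeal Rᵐᵒᵖ, TwoSidedIdeal.asIdeal P = Module.annihilator Rᵐᵒᵖ T →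
        LeftSAP P.ringCon.Quotient) :
    LeftSAP Rᵐᵒᵖ := by
  intro S _ _ hS
  obtain ⟨E, _, _, i, hHull⟩ := exists_injective_hull Rᵐᵒᵖ S
  obtain ⟨hEinj, hiinj, hess⟩ := hHull
  have hannE := hann S hS E i ⟨hEinj, hiinj, hess⟩
  let P := annTSI Rᵐᵒᵖ S
  have hP := annTSI_asIdeal Rᵐᵒᵖ S
  have hSAP : LeftSAP P.ringCon.Quotient := hquot S hS P (by rw [hP])
  let Q := P.ringCon.Quotient
  let π : Rᵐᵒᵖ →+* Q := P.ringCon.mk'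
  have hπ : Function.Surjective π := annTSI_mk'_surjective Rᵐᵒᵖ S
  have h0S : ∀ a : Rᵐᵒᵖ, π a = 0 → ∀ m : S, a • m = 0 := fun a ha =>
    (annTSI_mk'_eq_zero Rᵐᵒᵖ S a).mp ha
  have h0E : ∀ a : Rᵐᵒᵖ, π a = 0 → ∀ m : E, a • m = 0 := by
    intro a ha m
    have h1 : a ∈ Module.annihilator Rᵐᵒᵖ S := Module.mem_annihilator.mpr (h0S a ha)
    rw [hannE] at h1
    exact Module.mem_annihilator.mp h1 m
  letI : Module Q S := modOfSurj π hπ S h0S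
  letI : Module Q E := modOfSurj π hπ E h0E
  have hcS := modOfSurj_smul π hπ S h0S
  have hcE := modOfSurj_smul π hπ E h0E
  have hsimpleQ : IsSimpleModule Q S := isSimpleModule_transfer π S hcS hS
  have hfpi : FPInjective Q S := hSAP S hsimpleQ
  exact purity_step π hπ S E hcS hcE hfpi hEinj i hiinj
end

section
/- Let R be a ring such that for every simple right R-module T, Ann(T) = Ann(E(T)), and such that R/P is a right V-ring for every right primitive ideal P. Then R is a right V-ring. -/
/-!
Let `E` be an injective hull of a simple right module `S` and `P = Ann(S) = Ann(E)`. Both `S` and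
`E` are modules over `R/P`, over which `S` is still simple and hence injective. So the embedding
`S → E` splits `R/P`-linearly, hence `R`-linearly, and `S` is a direct summand of the injective
module `E`. Injective hulls are obtained as maximal essential extensions inside an injective module.
-/

/-- Every simple left `A`-module is injective. Applied to `A = Rᵐᵒᵖ` this says
that `R` is a right V-ring. -/
def LeftV (A : Type) [Ring A] : Prop :=
  ∀ (S : Type) [AddCommGroup S] [Module A S], IsSimpleModule A S → Module.Injective A S

universe u v

theorem Module.Injective.of_retract {A : Type u} [Ring A] {M Q : Type v} [AddCommGroup M]
    [Module A M] [AddCommGroup Q] [Module A Q] [Module.Injective A Q]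
    (s : M →ₗ[A] Q) (r : Q →ₗ[A] M) (hrs : r ∘ₗ s = LinearMap.id) : Module.Injective A M where
  out _ _ _ _ _ _ f hf g := by
    obtain ⟨h, hh⟩ := Module.Injective.out f hf (s ∘ₗ g)
    exact ⟨r ∘ₗ h, fun x => by simp [hh, ← LinearMap.comp_apply r s, hrs]⟩

theorem Module.Injective.of_restrictScalars_embedding {A B : Type u} [Ring A] [Ring B] [SMul A B]
    {T E : Type v} [AddCommGroup T] [Module A T] [Module B T] [IsScalarTower A B T]
    [AddCommGroup E] [Module A E] [Module B E] [IsScalarTower A B E]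
    [Module.Injective A E] [Module.Injective B T] (i : T →ₗ[B] E) (hi : Function.Injective i) :
    Module.Injective A T := by
  obtain ⟨r, hr⟩ := Module.Injective.out i hi LinearMap.id
  exact of_retract (i.restrictScalars A) (r.restrictScalars A) (LinearMap.ext hr)

theorem Module.exists_embedding_into_injective (A T : Type u) [Ring A] [AddCommGroup T]
    [Module A T] : ∃ (Q : Type u) (_ : AddCommGroup Q) (_ : Module A Q),
      Module.Injective A Q ∧ ∃ j : T →ₗ[A] Q, Function.Injective j := by
  open CategoryTheory in
  let ι := Injective.ι (ModuleCat.of A T)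
  exact ⟨(Injective.under (ModuleCat.of A T) : ModuleCat A), inferInstance, inferInstance,
    Module.injective_module_of_injective_object (inj := Injective.injective_under _) _ _,
    ι.hom, (ModuleCat.mono_iff_injective ι).mp inferInstance⟩

theorem exists_maximal_disjoint {α : Type*} [CompleteLattice α] [IsCompactlyGenerated α] (a : α) :
    ∃ c, Maximal (Disjoint a) c := by
  obtain ⟨c, -, hc⟩ := zorn_le_nonempty₀ {c | Disjoint a c}
    (fun s hs hchain _ _ => ⟨sSup s, (hchain.directedOn.disjoint_sSup_right).2 fun _ hb => hs hb,
      fun _ hz => le_sSup hz⟩) ⊥ disjoint_bot_right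
  exact ⟨c, hc⟩

namespace Submodule

variable {A Q : Type*} [Ring A] [AddCommGroup Q] [Module A Q]

def IsEssentialIn (S E : Submodule A Q) : Prop :=
  S ≤ E ∧ ∀ x ∈ E, x ≠ 0 → ∃ a : A, a • x ∈ S ∧ a • x ≠ 0

theorem IsEssentialIn.refl (S : Submodule A Q) : S.IsEssentialIn S :=
  ⟨le_rfl, fun x hx hx0 => ⟨1, by rwa [one_smul], by rwa [one_smul]⟩⟩

theorem IsEssentialIn.trans {S E F : Submodule A Q} (hSE : S.IsEssentialIn E)
    (hEF : E.IsEssentialIn F) : S.IsEssentialIn F := by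
  refine ⟨hSE.1.trans hEF.1, fun x hx hx0 => ?_⟩
  obtain ⟨a, haE, ha0⟩ := hEF.2 x hx hx0
  obtain ⟨b, hbS, hb0⟩ := hSE.2 _ haE ha0
  exact ⟨b * a, by rwa [mul_smul], by rwa [mul_smul]⟩

theorem exists_maximal_isEssentialIn (S : Submodule A Q) : ∃ E, Maximal S.IsEssentialIn E := by
  obtain ⟨E, -, hE⟩ := zorn_le_nonempty₀ {E | S.IsEssentialIn E}
    (fun c hc hchain y hy => ⟨sSup c, ⟨(hc hy).1.trans (le_sSup hy), fun x hx hx0 => by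
      obtain ⟨E, hE, hxE⟩ := (mem_sSup_of_directed ⟨y, hy⟩ hchain.directedOn).mp hx
      exact (hc hE).2 x hxE hx0⟩, fun _ hz => le_sSup hz⟩) S (IsEssentialIn.refl S)
  exact ⟨E, hE⟩

/-- The image of `E` in `Q ⧸ C` is essential when `C` is a maximal complement of `E`. -/
theorem exists_smul_sub_mem_of_maximal_disjoint {E C : Submodule A Q}
    (hC : Maximal (Disjoint E) C) {q : Q} (hq : q ∉ C) :
    ∃ a : A, ∃ e ∈ E, e ≠ 0 ∧ a • q - e ∈ C := by
  have hlt : ¬ Disjoint E (C ⊔ span A {q}) := fun h =>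
    hq (hC.2 h le_sup_left (mem_sup_right (mem_span_singleton_self q)))
  obtain ⟨e, heE, heK, he0⟩ : ∃ e ∈ E, e ∈ C ⊔ span A {q} ∧ e ≠ 0 := by
    simpa [disjoint_def] using hlt
  obtain ⟨c, hc, _, hs, rfl⟩ := mem_sup.mp heK
  obtain ⟨a, rfl⟩ := mem_span_singleton.mp hs
  exact ⟨a, _, heE, he0, by simpa using C.neg_mem hc⟩

theorem injective_of_maximal_isEssentialIn [Module.Injective A Q] {S E : Submodule A Q}
    (hE : Maximal S.IsEssentialIn E) : Module.Injective A E := by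
  obtain ⟨C, hC⟩ := exists_maximal_disjoint E
  have hφ : Function.Injective (C.mkQ ∘ₗ E.subtype) := by
    rw [← LinearMap.ker_eq_bot, LinearMap.ker_comp, ker_mkQ, ← disjoint_iff_comap_eq_bot]
    exact hC.1
  -- `g` inverts the embedding `E → Q ⧸ C`; maximality of `E` forces `range g ≤ E`, so that
  -- `g ∘ mkQ` retracts `Q` onto `E`.
  obtain ⟨g, hg⟩ := Module.Injective.out _ hφ E.subtype
  have hess : E.IsEssentialIn (LinearMap.range g) := by
    refine ⟨fun e he => ⟨C.mkQ e, hg ⟨e, he⟩⟩, ?_⟩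
    rintro _ ⟨y, rfl⟩ hy0
    obtain ⟨q, rfl⟩ := C.mkQ_surjective y
    have hq : q ∉ C := fun hq => hy0 (by simp [(Submodule.Quotient.mk_eq_zero C).mpr hq])
    obtain ⟨a, e, heE, he0, hae⟩ := exists_smul_sub_mem_of_maximal_disjoint hC hq
    have : a • g (C.mkQ q) = e := calc
      _ = g (C.mkQ e) := by
        rw [← map_smul, ← map_smul]; exact congrArg g ((Submodule.Quotient.eq C).mpr hae)
      _ = e := hg ⟨e, heE⟩
    exact ⟨a, this ▸ heE, this ▸ he0⟩
  have hrange : LinearMap.range g ≤ E := hE.2 (hE.1.trans hess) hess.1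
  exact Module.Injective.of_retract E.subtype ((g.codRestrict E fun y => hrange ⟨y, rfl⟩) ∘ₗ C.mkQ)
    (LinearMap.ext fun e => Subtype.ext (hg e))

end Submodule

namespace TwoSidedIdeal

variable {A : Type*} [Ring A] (P : TwoSidedIdeal A) {M N : Type*} [AddCommGroup M] [Module A M]
  [AddCommGroup N] [Module A N]

lemma ringCon_le_ker_toAddMonoidEnd (h : P.asIdeal ≤ Module.annihilator A M) :
    P.ringCon ≤ RingCon.ker (Module.toAddMonoidEnd A M) := by
  intro a b hab
  rw [RingCon.ker_apply]
  ext m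
  have := Module.mem_annihilator.mp (h (TwoSidedIdeal.mem_asIdeal.mpr ((P.rel_iff a b).mp hab))) m
  rwa [sub_smul, sub_eq_zero] at this

abbrev quotientModule (h : P.asIdeal ≤ Module.annihilator A M) : Module P.ringCon.Quotient M :=
  Module.compHom M (P.ringCon.lift (Module.toAddMonoidEnd A M) (P.ringCon_le_ker_toAddMonoidEnd h))

lemma isScalarTower_quotientModule (h : P.asIdeal ≤ Module.annihilator A M) :
    letI := P.quotientModule h; IsScalarTower A P.ringCon.Quotient M :=
  letI := P.quotientModule h
  ⟨fun a b m => by induction b using Quotient.ind; exact mul_smul a _ m⟩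

lemma isSimpleModule_quotientModule (h : P.asIdeal ≤ Module.annihilator A M)
    [IsSimpleModule A M] : letI := P.quotientModule h; IsSimpleModule P.ringCon.Quotient M :=
  letI := P.quotientModule h
  haveI : RingHomSurjective P.ringCon.mk' := ⟨P.ringCon.mk'_surjective⟩
  (LinearMap.isSimpleModule_iff_of_bijective
    (σ := P.ringCon.mk') { toFun := id, map_add' := fun _ _ => rfl, map_smul' := fun _ _ => rfl }
    Function.bijective_id).mp inferInstance

def quotientLinearMap (hM : P.asIdeal ≤ Module.annihilator A M)
    (hN : P.asIdeal ≤ Module.annihilator A N) (f : M →ₗ[A] N) :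
    letI := P.quotientModule hM; letI := P.quotientModule hN; M →ₗ[P.ringCon.Quotient] N :=
  letI := P.quotientModule hM; letI := P.quotientModule hN
  { toFun := f
    map_add' := f.map_add
    map_smul' := fun b m => by induction b using Quotient.ind; exact f.map_smul _ m }

end TwoSidedIdeal

theorem exists_isInjectiveHull (A T : Type) [Ring A] [AddCommGroup T] [Module A T] :
    ∃ (E : Type) (_ : AddCommGroup E) (_ : Module A E) (i : T →ₗ[A] E), IsInjectiveHull A i := by
  obtain ⟨Q, _, _, _, j, hj⟩ := Module.exists_embedding_into_injective A T
  obtain ⟨E, hE⟩ := (LinearMap.range j).exists_maximal_isEssentialIn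
  refine ⟨E, inferInstance, inferInstance, j.codRestrict E fun t => hE.1.1 ⟨t, rfl⟩,
    Submodule.injective_of_maximal_isEssentialIn hE, fun t t' h => hj (congrArg Subtype.val h),
    fun K hK => ?_⟩
  obtain ⟨x, hxK, hx0⟩ := (Submodule.ne_bot_iff K).mp hK
  obtain ⟨a, ⟨t, ht⟩, ha0⟩ := hE.1.2 x x.2 (by simpa using hx0)
  refine (Submodule.ne_bot_iff _).mpr
    ⟨a • x, ⟨⟨t, Subtype.ext ht⟩, K.smul_mem a hxK⟩, fun h => ha0 ?_⟩
  simpa using congrArg Subtype.val h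

/-- If `Ann(T) = Ann(E(T))` for every simple right `R`-module `T` and `R/P` is a right V-ring
for every right primitive ideal `P`, then `R` is a right V-ring. -/
theorem stmt5 (R : Type) [Ring R]
    (hann : ∀ (T : Type) [AddCommGroup T] [Module Rᵐᵒᵖ T], IsSimpleModule Rᵐᵒᵖ T →
      ∀ (E : Type) [AddCommGroup E] [Module Rᵐᵒᵖ E] (i : T →ₗ[Rᵐᵒᵖ] E),
        IsInjectiveHull Rᵐᵒᵖ i →
          Module.annihilator Rᵐᵒᵖ T = Module.annihilator Rᵐᵒᵖ E)
    (hquot : ∀ (T : Type) [AddCommGroup T] [Module Rᵐᵒᵖ T], IsSimpleModule Rᵐᵒᵖ T →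
      ∀ P : TwoSidedIdeal Rᵐᵒᵖ, TwoSidedIdeal.asIdeal P = Module.annihilator Rᵐᵒᵖ T →
        LeftV P.ringCon.Quotient) :
    LeftV Rᵐᵒᵖ := by
  intro S _ _ hS
  obtain ⟨E, _, _, i, hi⟩ := exists_isInjectiveHull Rᵐᵒᵖ S
  let P := (Module.annihilator Rᵐᵒᵖ S).toTwoSided
  have hPS : P.asIdeal = Module.annihilator Rᵐᵒᵖ S := Ideal.asIdeal_toTwoSided _
  have hPE : P.asIdeal ≤ Module.annihilator Rᵐᵒᵖ E := (hPS.trans (hann S hS E i hi)).le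
  let := P.quotientModule hPS.le
  let := P.quotientModule hPE
  have := P.isScalarTower_quotientModule hPS.le
  have := P.isScalarTower_quotientModule hPE
  have := hi.1
  have := hquot S hS P hPS S (P.isSimpleModule_quotientModule hPS.le)
  exact Module.Injective.of_restrictScalars_embedding (P.quotientLinearMap hPS.le hPE i) hi.2.1
end

section
/- A commutative ring R is von Neumann regular if and only if every simple R-module is injective (R is a V-ring). -/
/-- In a simple module over a commutative ring, an element annihilating one nonzero
element annihilates everything. -/
lemma stmt6_ann_le {R : Type} [CommRing R] {S : Type} [AddCommGroup S] [Module R S]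
    (hS : IsSimpleModule R S) {s t : S} (hs : s ≠ 0) {r : R} (hr : r • s = 0) :
    r • t = 0 := by
  have hsp : (Submodule.span R {s} : Submodule R S) = ⊤ := by
    rcases hS.eq_bot_or_eq_top (Submodule.span R {s}) with h | h
    · exfalso
      apply hs
      have hmem : s ∈ Submodule.span R {s} := Submodule.mem_span_singleton_self s
      rw [h] at hmem
      simpa using hmem
    · exact h
  have ht : t ∈ Submodule.span R {s} := by rw [hsp]; exact Submodule.mem_top
  rcases Submodule.mem_span_singleton.mp ht with ⟨c, rfl⟩
  rw [smul_comm, hr, smul_zero]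

/-- A commutative ring is von Neumann regular iff every simple module is injective
(i.e. `R` is a V-ring). -/
theorem stmt6 (R : Type) [CommRing R] :
    (∀ a : R, ∃ x : R, a = a * x * a) ↔
      (∀ (S : Type) [AddCommGroup S] [Module R S],
        IsSimpleModule R S → Module.Injective R S) := by
  constructor
  · intro hvn S _ _ hS
    apply Module.Baer.injective
    intro I f
    by_cases hf : ∃ a : I, f a ≠ 0
    · obtain ⟨⟨a, haI⟩, hfa⟩ := hf
      obtain ⟨x, hx⟩ := hvn a
      set e := x * a with he
      have heI : e ∈ I := I.mul_mem_left x haI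
      have hee : e * e = e := by rw [he]; linear_combination (-x) * hx
      set fe : S := f ⟨e, heI⟩ with hfe
      have hfae : f ⟨a, haI⟩ = a • fe := by
        have : (⟨a, haI⟩ : I) = a • (⟨e, heI⟩ : I) := by
          ext; simp only [SetLike.val_smul, smul_eq_mul]; linear_combination hx
        rw [this, map_smul]
      have hfe0 : fe ≠ 0 := by
        intro h; apply hfa; rw [hfae, h, smul_zero]
      have hefe : e • fe = fe := by
        have : e • (⟨e, heI⟩ : I) = (⟨e, heI⟩ : I) := by
          ext; simp [hee]
        rw [hfe, ← map_smul, this]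
      refine ⟨LinearMap.toSpanSingleton R S fe, fun b hb => ?_⟩
      -- key claim: f b = b • fe for all b ∈ I
      have hcI : b - b * e ∈ I := I.sub_mem hb (I.mul_mem_right e hb)
      have hfc : f ⟨b - b * e, hcI⟩ = 0 := by
        by_contra hne
        have he0 : e • f ⟨b - b * e, hcI⟩ = 0 := by
          have : e • (⟨b - b * e, hcI⟩ : I) = (0 : I) := by
            ext; simp only [SetLike.val_smul, smul_eq_mul, ZeroMemClass.coe_zero]
            linear_combination (-b) * hee
          rw [← map_smul, this, map_zero]
        have := stmt6_ann_le hS (t := fe) hne he0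
        rw [hefe] at this
        exact hfe0 this
      have hsplit : (⟨b, hb⟩ : I) = b • (⟨e, heI⟩ : I) + ⟨b - b * e, hcI⟩ := by
        ext; simp
      rw [LinearMap.toSpanSingleton_apply, hsplit, map_add, map_smul, hfc, add_zero, hfe]
    · push_neg at hf
      exact ⟨0, fun x mem => by rw [hf ⟨x, mem⟩, LinearMap.zero_apply]⟩
  · intro hinj a
    set μ : R →ₗ[R] R := LinearMap.toSpanSingleton R R a with hμ
    set A : Ideal R := LinearMap.ker μ with hA
    set J : Ideal R := Ideal.span {a * a} ⊔ A with hJ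
    by_cases hJtop : J = ⊤
    · have h1 : (1 : R) ∈ J := hJtop ▸ Submodule.mem_top
      rw [hJ] at h1
      rcases Submodule.mem_sup.mp h1 with ⟨y, hy, z, hz, hyz⟩
      rcases Ideal.mem_span_singleton'.mp hy with ⟨c, hc⟩
      have hza : z * a = 0 := by
        have := (LinearMap.mem_ker).mp hz
        simpa [hμ, LinearMap.toSpanSingleton_apply, smul_eq_mul, mul_comm] using this
      refine ⟨c * a, ?_⟩
      linear_combination (-a) * hyz + (-a) * hc + hza
    · obtain ⟨m, hm, hJm⟩ := Ideal.exists_le_maximal J hJtop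
      exfalso
      haveI : IsSimpleModule R (R ⧸ m) :=
        isSimpleModule_iff_isCoatom.mpr (Ideal.isMaximal_def.mp hm)
      have hSinj := hinj (R ⧸ m) inferInstance
      have hAm : A ≤ m := le_trans le_sup_right hJm
      have ha2m : a * a ∈ m := hJm (le_sup_left (α := Ideal R)
        (Ideal.subset_span (Set.mem_singleton _)))
      set i : (R ⧸ A) →ₗ[R] R := Submodule.liftQ A μ le_rfl with hi
      have hiinj : Function.Injective i := by
        rw [← LinearMap.ker_eq_bot, hi, Submodule.ker_liftQ_eq_bot' A μ rfl]
      set f : (R ⧸ A) →ₗ[R] (R ⧸ m) := Submodule.liftQ A m.mkQ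
        (by rw [Submodule.ker_mkQ]; exact hAm) with hf
      obtain ⟨g, hg⟩ := hSinj.out i hiinj f
      have h1 := hg (Submodule.Quotient.mk 1)
      have hia : i (Submodule.Quotient.mk 1) = a := by
        rw [hi, Submodule.liftQ_apply, hμ, LinearMap.toSpanSingleton_apply, one_smul]
      have hf1 : f (Submodule.Quotient.mk 1) = Submodule.Quotient.mk 1 := by
        rw [hf, Submodule.liftQ_apply, Submodule.mkQ_apply]
      rw [hia, hf1] at h1
      -- g a = 1 in R ⧸ m; but g a = a • g 1
      have hga : a • g 1 = Submodule.Quotient.mk 1 := by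
        rw [← h1, ← map_smul, smul_eq_mul, mul_one]
      obtain ⟨u, hu⟩ := Submodule.Quotient.mk_surjective m (g 1)
      rw [← hu, ← Submodule.Quotient.mk_smul, smul_eq_mul] at hga
      have hmem : a * u - 1 ∈ m := (Submodule.Quotient.eq m).mp hga
      have ham : a ∈ m := by
        have h2 : a * (a * u - 1) ∈ m := m.mul_mem_left a hmem
        have h3 : a * a * u ∈ m := m.mul_mem_right u ha2m
        have : a * (a * u - 1) - a * a * u = -a := by ring
        have := m.sub_mem h2 h3
        rw [show a * (a * u - 1) - a * a * u = -a by ring] at this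
        simpa using m.neg_mem this
      have : (1 : R) ∈ m := by
        have := m.sub_mem (m.mul_mem_right u ham) hmem
        rwa [show a * u - (a * u - 1) = 1 by ring] at this
      exact hm.ne_top (Ideal.eq_top_iff_one m |>.mpr this)
end

section
/- Let R be a right quo ring (every maximal right ideal of R is a two-sided ideal) that is a right V-ring. Then for every nonzero a in R, aR + r(a) = R, where r(a) is the right annihilator of a; consequently R is von Neumann regular and reduced. -/
open MulOpposite

/-- Let `R` be a right quo ring (every maximal right ideal is two-sided) which is a
right V-ring. Then `aR + r(a) = R` for every nonzero `a`, and consequently `R` is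
von Neumann regular and reduced. -/
theorem stmt7 (R : Type) [Ring R]
    (hquo : ∀ m : Submodule Rᵐᵒᵖ R, IsCoatom m → ∀ x ∈ m, ∀ r : R, r * x ∈ m)
    (hV : ∀ (S : Type) [AddCommGroup S] [Module Rᵐᵒᵖ S],
      IsSimpleModule Rᵐᵒᵖ S → Module.Injective Rᵐᵒᵖ S) :
    (∀ a : R, a ≠ 0 →
      Submodule.span Rᵐᵒᵖ ({a} : Set R) ⊔ Submodule.span Rᵐᵒᵖ {x : R | a * x = 0} = ⊤) ∧
    (∀ a : R, ∃ x : R, a = a * x * a) ∧ IsReduced R := by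
  -- The module `R` over `Rᵐᵒᵖ` has compact top, hence coatomic submodule lattice.
  have htopfg : (⊤ : Submodule Rᵐᵒᵖ R).FG := by
    refine ⟨{1}, ?_⟩
    rw [eq_top_iff]
    intro x _
    have : x = (op x : Rᵐᵒᵖ) • (1 : R) := by simp
    rw [this]
    exact Submodule.smul_mem _ _ (Submodule.subset_span (by simp))
  have hcoatomic : IsCoatomic (Submodule Rᵐᵒᵖ R) :=
    CompleteLattice.coatomic_of_top_compact ((Submodule.fg_iff_compact _).mp htopfg)
  -- Main part: aR + r(a) = R for a ≠ 0.
  have main : ∀ a : R, a ≠ 0 →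
      Submodule.span Rᵐᵒᵖ ({a} : Set R) ⊔ Submodule.span Rᵐᵒᵖ {x : R | a * x = 0} = ⊤ := by
    intro a ha
    by_contra hne
    obtain ⟨M, hM, hle⟩ := (eq_top_or_exists_le_coatom
      (Submodule.span Rᵐᵒᵖ ({a} : Set R) ⊔ Submodule.span Rᵐᵒᵖ {x : R | a * x = 0})).resolve_left hne
    have haM : a ∈ M := hle (le_sup_left (b := Submodule.span Rᵐᵒᵖ {x : R | a * x = 0})
      (Submodule.subset_span rfl))
    have hrM : ∀ x : R, a * x = 0 → x ∈ M := fun x hx =>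
      hle (le_sup_right (a := Submodule.span Rᵐᵒᵖ ({a} : Set R)) (Submodule.subset_span hx))
    -- the simple module S = R / M
    set S := R ⧸ M with hS
    have hsimple : IsSimpleModule Rᵐᵒᵖ S := isSimpleModule_iff_isCoatom.mpr hM
    have hinj : Module.Injective Rᵐᵒᵖ S := hV S hsimple
    -- maps
    set T : Rᵐᵒᵖ →ₗ[Rᵐᵒᵖ] R := LinearMap.toSpanSingleton Rᵐᵒᵖ R a with hT
    set q : Rᵐᵒᵖ →ₗ[Rᵐᵒᵖ] S := LinearMap.toSpanSingleton Rᵐᵒᵖ S (Submodule.Quotient.mk 1) with hq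
    have hker : LinearMap.ker T ≤ LinearMap.ker q := by
      intro c hc
      have hc' : a * c.unop = 0 := by
        have : (c • a : R) = 0 := hc
        simpa [op_smul_eq_mul] using this
      have : q c = Submodule.Quotient.mk (c.unop) := by
        show c • (Submodule.Quotient.mk (1 : R) : S) = _
        rw [← Submodule.Quotient.mk_smul]
        congr 1
        simp [op_smul_eq_mul]
      rw [LinearMap.mem_ker, this, Submodule.Quotient.mk_eq_zero]
      exact hrM _ hc'
    -- f : range T →ₗ S
    let f : (LinearMap.range T : Submodule Rᵐᵒᵖ R) →ₗ[Rᵐᵒᵖ] S :=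
      ((LinearMap.ker T).liftQ q hker).comp T.quotKerEquivRange.symm.toLinearMap
    -- extend via injectivity
    obtain ⟨h, hh⟩ := hinj.out (LinearMap.range T).subtype
      (Submodule.injective_subtype _) f
    -- compute h a
    have hTa : T 1 = a := by simp [hT, LinearMap.toSpanSingleton_apply]
    have hamem : a ∈ LinearMap.range T := ⟨1, hTa⟩
    have hfa : f ⟨a, hamem⟩ = Submodule.Quotient.mk (1 : R) := by
      have h1 : T.quotKerEquivRange.symm ⟨a, hamem⟩ = Submodule.Quotient.mk (1 : Rᵐᵒᵖ) := by
        rw [LinearEquiv.symm_apply_eq]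
        exact Subtype.ext (by simpa using hTa.symm)
      show ((LinearMap.ker T).liftQ q hker) (T.quotKerEquivRange.symm ⟨a, hamem⟩) = _
      rw [h1, Submodule.liftQ_apply]
      simp [hq, LinearMap.toSpanSingleton_apply]
    have hha : h a = Submodule.Quotient.mk (1 : R) := by
      have h2 := hh ⟨a, hamem⟩
      exact h2.trans hfa
    -- h a = (op a) • h 1
    obtain ⟨c, hc⟩ := Submodule.Quotient.mk_surjective M (h 1)
    have hha' : h a = Submodule.Quotient.mk (c * a) := by
      have : h a = (op a : Rᵐᵒᵖ) • h 1 := by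
        rw [← map_smul]
        congr 1
        simp [op_smul_eq_mul]
      rw [this, ← hc, ← Submodule.Quotient.mk_smul]
      rfl
    have hone : (1 : R) ∈ M := by
      have : Submodule.Quotient.mk (c * a) = (Submodule.Quotient.mk (1 : R) : S) :=
        hha'.symm.trans hha
      have hsub : (1 : R) - c * a ∈ M := (Submodule.Quotient.eq M).mp this.symm
      have hca : c * a ∈ M := hquo M hM a haM c
      have := M.add_mem hsub hca
      simpa using this
    exact hM.1 ((Submodule.eq_top_iff'.mpr fun x => by
      simpa using M.smul_mem (op x) hone))
  -- strongly regular: a = a² x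
  have hsr : ∀ a : R, a ≠ 0 → ∃ x : R, a = a * a * x := by
    intro a ha
    have h1 : (1 : R) ∈ Submodule.span Rᵐᵒᵖ ({a} : Set R) ⊔
        Submodule.span Rᵐᵒᵖ {x : R | a * x = 0} := by
      rw [main a ha]; trivial
    obtain ⟨u, hu, v, hv, huv⟩ := Submodule.mem_sup.mp h1
    obtain ⟨r, hr⟩ := Submodule.mem_span_singleton.mp hu
    have hav : a * v = 0 := by
      have hvspan : v ∈ Submodule.span Rᵐᵒᵖ {x : R | a * x = 0} := hv
      -- the set {x | a * x = 0} is already a submodule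
      let ml : R →ₗ[Rᵐᵒᵖ] R :=
        { toFun := fun x => a * x
          map_add' := fun x y => mul_add a x y
          map_smul' := fun c x => by
            simp only [RingHom.id_apply, op_smul_eq_mul, smul_eq_mul_unop, mul_assoc] }
      have hle : Submodule.span Rᵐᵒᵖ {x : R | a * x = 0} ≤ LinearMap.ker ml := by
        rw [Submodule.span_le]
        intro x hx
        exact LinearMap.mem_ker.mpr hx
      exact hle hvspan
    refine ⟨r.unop, ?_⟩
    have : a * 1 = a * (u + v) := by rw [huv]
    have hu' : u = a * r.unop := by
      rw [← hr]; simp [op_smul_eq_mul]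
    calc a = a * (u + v) := by rw [huv, mul_one]
      _ = a * u + a * v := mul_add a u v
      _ = a * (a * r.unop) := by rw [hav, hu', add_zero]
      _ = a * a * r.unop := (mul_assoc a a r.unop).symm
  -- reduced
  have hred : IsReduced R := by
    have hsq : ∀ b : R, b * b = 0 → b = 0 := by
      intro b hb
      by_contra hbne
      obtain ⟨x, hx⟩ := hsr b hbne
      rw [hb, zero_mul] at hx
      exact hbne hx
    constructor
    intro x hx
    obtain ⟨n, hn⟩ := hx
    -- strong induction on n
    have key : ∀ n : ℕ, ∀ y : R, y ^ n = 0 → y = 0 := by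
      intro n
      induction n using Nat.strong_induction_on with
      | _ n ih =>
        intro y hy
        match n with
        | 0 => simpa using congrArg (y * ·) hy
        | 1 => simpa using hy
        | (m + 2) =>
          have h2 : (y ^ (m + 1)) * (y ^ (m + 1)) = 0 := by
            have he : (m + 1) + (m + 1) = (m + 2) + m := by omega
            rw [← pow_add, he, pow_add, hy, zero_mul]
          have := hsq _ h2
          exact ih (m + 1) (by omega) y this
    exact key n x hn
  -- regular
  have hreg : ∀ a : R, ∃ x : R, a = a * x * a := by
    intro a
    by_cases ha : a = 0
    · exact ⟨0, by simp [ha]⟩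
    · obtain ⟨x, hx⟩ := hsr a ha
      refine ⟨x, ?_⟩
      -- a * (a*x - ... ) trick: a * (a * x) = a, so a * (a*x - 1) = 0;
      -- reduced gives (a*x - 1) * a = 0, i.e. a*x*a = a.
      have h1 : a * (a * x - 1) = 0 := by
        have : a * (a * x) = a := by rw [← mul_assoc, ← hx]
        rw [mul_sub, this, mul_one, sub_self]
      have h2 : ((a * x - 1) * a) * ((a * x - 1) * a) = 0 := by
        calc ((a * x - 1) * a) * ((a * x - 1) * a)
            = (a * x - 1) * (a * (a * x - 1)) * a := by
              simp only [mul_assoc]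
          _ = 0 := by rw [h1, mul_zero, zero_mul]
      have h3 : (a * x - 1) * a = 0 := by
        have := hred.eq_zero _ ⟨2, by rw [sq]; exact h2⟩
        exact this
      have h4 : a * x * a - a = 0 := by rw [sub_mul, one_mul] at h3; exact h3
      exact (sub_eq_zero.mp h4).symm
  exact ⟨main, hreg, hred⟩
end

section
/- A ring R is a right SAP ring if and only if for every right R-module M and every submodule N of M such that M/N is finitely presented, the Jacobson radical of N equals N ∩ J(M), where J denotes the radical (intersection of all maximal submodules). -/
/-- The radical `J(M)` of a module: the intersection of all maximal submodules
(equal to `M` itself if there are none). -/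
def radJ (A : Type) [Ring A] (M : Type) [AddCommGroup M] [Module A M] : Submodule A M :=
  sInf {m : Submodule A M | IsCoatom m}

section Aux
variable {A : Type} [Ring A] {M : Type} [AddCommGroup M] [Module A M]

lemma aux_ker_coatom {S : Type} [AddCommGroup S] [Module A S] [IsSimpleModule A S]
    (g : M →ₗ[A] S) (hg : Function.Surjective g) : IsCoatom (LinearMap.ker g) := by
  rw [← isSimpleModule_iff_isCoatom]
  exact IsSimpleModule.congr (g.quotKerEquivOfSurjective hg)

lemma aux_comap_coatom (N : Submodule A M) {K : Submodule A M} (hK : IsCoatom K)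
    (hNK : ¬ N ≤ K) : IsCoatom (K.comap N.subtype) := by
  constructor
  · intro htop
    exact hNK fun n hn => by
      have : (⟨n, hn⟩ : N) ∈ K.comap N.subtype := htop ▸ Submodule.mem_top
      exact this
  · intro P hP
    obtain ⟨p, hpP, hpK⟩ := SetLike.exists_of_lt hP
    have hmapK : ¬ Submodule.map N.subtype P ≤ K := by
      intro hle
      exact hpK (hle ⟨p, hpP, rfl⟩)
    have hsup : K ⊔ Submodule.map N.subtype P = ⊤ :=
      hK.2 _ (lt_of_le_of_ne le_sup_left (fun h => hmapK (h ▸ le_sup_right)))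
    rw [eq_top_iff]
    rintro ⟨n, hn⟩ -
    have hmem : n ∈ K ⊔ Submodule.map N.subtype P := hsup ▸ Submodule.mem_top
    obtain ⟨k, hk, p', hp', hsum⟩ := Submodule.mem_sup.mp hmem
    obtain ⟨p'', hp''P, rfl⟩ := hp'
    have h1 : (⟨n, hn⟩ : N) - p'' ∈ K.comap N.subtype := by
      have hco : (((⟨n, hn⟩ : N) - p'' : N) : M) = k := by
        have : (((⟨n, hn⟩ : N) - p'' : N) : M) = n - (p'' : M) := rfl
        rw [this, ← hsum, Submodule.subtype_apply]
        abel
      simpa [Submodule.mem_comap, hco] using hk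
    have : (⟨n, hn⟩ : N) = ((⟨n, hn⟩ : N) - p'') + p'' := by abel
    rw [this]
    exact P.add_mem (hP.le h1) hp''P

end Aux

/-- `R` is a right SAP ring iff `J(N) = N ∩ J(M)` for every submodule `N` of a right module
`M` such that `M/N` is finitely presented. -/
theorem stmt10 (R : Type) [Ring R] :
    (∀ (S : Type) [AddCommGroup S] [Module Rᵐᵒᵖ S],
      IsSimpleModule Rᵐᵒᵖ S → FPInjective Rᵐᵒᵖ S) ↔
    (∀ (M : Type) [AddCommGroup M] [Module Rᵐᵒᵖ M] (N : Submodule Rᵐᵒᵖ M),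
      Module.FinitePresentation Rᵐᵒᵖ (M ⧸ N) →
        Submodule.map N.subtype (radJ Rᵐᵒᵖ N) = N ⊓ radJ Rᵐᵒᵖ M) := by
  constructor
  · intro h M _ _ N fp
    apply le_antisymm
    · refine le_inf (Submodule.map_subtype_le _ _) (le_sInf ?_)
      intro K hK
      by_cases hNK : N ≤ K
      · exact le_trans (Submodule.map_subtype_le _ _) hNK
      · calc Submodule.map N.subtype (radJ Rᵐᵒᵖ ↥N)
            ≤ Submodule.map N.subtype (K.comap N.subtype) :=
              Submodule.map_mono (sInf_le (aux_comap_coatom N hK hNK))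
          _ ≤ K := Submodule.map_comap_le _ _
    · rintro x ⟨hxN, hxJ⟩
      refine ⟨⟨x, hxN⟩, Submodule.mem_sInf.mpr ?_, rfl⟩
      intro K hK
      haveI : IsSimpleModule Rᵐᵒᵖ (↥N ⧸ K) := isSimpleModule_iff_isCoatom.mpr hK
      obtain ⟨g, hg⟩ := h (↥N ⧸ K) this M N fp K.mkQ
      have hgsurj : Function.Surjective g := by
        intro q
        obtain ⟨n, rfl⟩ := K.mkQ_surjective q
        exact ⟨n, hg n⟩
      have hker : x ∈ LinearMap.ker g :=
        Submodule.mem_sInf.mp hxJ _ (aux_ker_coatom g hgsurj)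
      have : K.mkQ ⟨x, hxN⟩ = 0 := by
        rw [← hg ⟨x, hxN⟩]; exact hker
      simpa [Submodule.Quotient.mk_eq_zero] using this
  · intro h S _ _ hS N' _ _ L fp f
    haveI := hS
    haveI := fp
    set D : Submodule Rᵐᵒᵖ (N' × S) := LinearMap.range (L.subtype.prod (-f)) with hD
    set j : N' →ₗ[Rᵐᵒᵖ] (N' × S) ⧸ D := D.mkQ.comp (LinearMap.inl Rᵐᵒᵖ N' S) with hj
    set i : S →ₗ[Rᵐᵒᵖ] (N' × S) ⧸ D := D.mkQ.comp (LinearMap.inr Rᵐᵒᵖ N' S) with hi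
    have hiinj : Function.Injective i := by
      rw [← LinearMap.ker_eq_bot]
      rw [eq_bot_iff]
      intro s hs
      have : (0, s) ∈ D := by
        simpa [hi, Submodule.Quotient.mk_eq_zero] using hs
      obtain ⟨x, hx⟩ := this
      have hx1 : (x : N') = 0 := by simpa using congrArg Prod.fst hx
      have hx0 : x = 0 := Subtype.ext hx1
      have hx2 : -f x = s := by simpa using congrArg Prod.snd hx
      rw [Submodule.mem_bot, ← hx2, hx0]
      simp
    set W : Submodule Rᵐᵒᵖ ((N' × S) ⧸ D) := LinearMap.range i with hW
    -- key: j ↑x = i (f x) for x ∈ L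
    have hkey : ∀ x : L, j (x : N') = i (f x) := by
      intro x
      simp only [hj, hi, LinearMap.comp_apply, LinearMap.inl_apply, LinearMap.inr_apply,
        Submodule.mkQ_apply]
      rw [Submodule.Quotient.eq]
      exact ⟨x, by simp⟩
    -- φ : N' → quotient by W, kernel is L
    set φ : N' →ₗ[Rᵐᵒᵖ] ((N' × S) ⧸ D) ⧸ W := W.mkQ.comp j with hφ
    have hLker : L ≤ LinearMap.ker φ := by
      intro x hx
      have : φ x = W.mkQ (i (f ⟨x, hx⟩)) := by
        simp only [hφ, LinearMap.comp_apply]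
        rw [hkey ⟨x, hx⟩]
      simp only [LinearMap.mem_ker, this, Submodule.mkQ_apply, Submodule.Quotient.mk_eq_zero]
      exact LinearMap.mem_range_self i _
    have hkerL : LinearMap.ker φ ≤ L := by
      intro n hn
      have : j n ∈ W := by
        simpa [hφ, Submodule.Quotient.mk_eq_zero] using hn
      obtain ⟨s, hs⟩ := this
      have : (n, 0) - (0, s) ∈ D := by
        rw [← Submodule.Quotient.eq]
        exact hs.symm
      obtain ⟨x, hx⟩ := this
      have hx1 : (x : N') = n := by simpa using congrArg Prod.fst hx
      exact hx1 ▸ x.2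
    set q : (N' ⧸ L) →ₗ[Rᵐᵒᵖ] ((N' × S) ⧸ D) ⧸ W := L.liftQ φ hLker with hq
    have hqsurj : Function.Surjective q := by
      intro z
      obtain ⟨y, rfl⟩ := W.mkQ_surjective z
      obtain ⟨⟨n, s⟩, rfl⟩ := D.mkQ_surjective y
      refine ⟨L.mkQ n, ?_⟩
      simp only [hq, Submodule.mkQ_apply, Submodule.liftQ_apply, hφ, LinearMap.comp_apply,
        hj, LinearMap.inl_apply]
      rw [Submodule.Quotient.eq]
      refine ⟨-s, ?_⟩
      have hdiff : ((n, 0) : N' × S) - (n, s) = (0, -s) := by simp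
      rw [← Submodule.Quotient.mk_sub, hdiff]
      rfl
    haveI fpW : Module.FinitePresentation Rᵐᵒᵖ (((N' × S) ⧸ D) ⧸ W) := by
      refine Module.finitePresentation_of_surjective q hqsurj ?_
      have : LinearMap.ker q = ⊥ := Submodule.ker_liftQ_eq_bot _ _ _ hkerL
      rw [this]
      exact Submodule.fg_bot
    have hrad := h _ W fpW
    -- W is simple, so radJ W = ⊥
    set e : S ≃ₗ[Rᵐᵒᵖ] W := LinearEquiv.ofInjective i hiinj with he
    haveI hWsimple : IsSimpleModule Rᵐᵒᵖ W := IsSimpleModule.congr e.symm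
    have hradW : radJ Rᵐᵒᵖ W = ⊥ :=
      le_bot_iff.mp (sInf_le (by exact isCoatom_bot))
    rw [hradW, Submodule.map_bot] at hrad
    have hWne : W ≠ ⊥ := by
      haveI := IsSimpleModule.nontrivial Rᵐᵒᵖ S
      obtain ⟨s, hs⟩ := exists_ne (0 : S)
      intro hbot
      have : i s ∈ W := LinearMap.mem_range_self i s
      rw [hbot, Submodule.mem_bot] at this
      exact hs (hiinj (by simpa using this))
    -- find a coatom not containing W
    have hex : ∃ K, IsCoatom K ∧ ¬ W ≤ K := by
      by_contra hc
      push_neg at hc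
      have : W ≤ radJ Rᵐᵒᵖ ((N' × S) ⧸ D) := le_sInf fun K hK => hc K hK
      exact hWne (by rw [← left_eq_inf.mpr this] at hrad; exact hrad.symm)
    obtain ⟨K, hK, hWK⟩ := hex
    have hdisj : K ⊓ W = ⊥ := by
      have hcomap : Submodule.comap i K = ⊥ := by
        rcases eq_bot_or_eq_top (Submodule.comap i K) with hb | ht
        · exact hb
        · exfalso
          apply hWK
          intro w hw
          obtain ⟨s, rfl⟩ := hw
          have : s ∈ Submodule.comap i K := ht ▸ Submodule.mem_top
          exact this
      rw [eq_bot_iff]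
      rintro x ⟨hxK, hxW⟩
      obtain ⟨s, rfl⟩ := hxW
      have : s ∈ Submodule.comap i K := hxK
      rw [hcomap, Submodule.mem_bot] at this
      simp [this]
    have hsup : K ⊔ W = ⊤ :=
      hK.2 _ (lt_of_le_of_ne le_sup_left (fun hh => hWK (hh ▸ le_sup_right)))
    have hcompl : IsCompl W K :=
      ⟨disjoint_iff.mpr (by rw [inf_comm]; exact hdisj), codisjoint_iff.mpr (by rwa [sup_comm])⟩
    set π := W.linearProjOfIsCompl K hcompl with hπ
    refine ⟨e.symm.toLinearMap.comp (π.comp j), ?_⟩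
    intro x
    have h1 : j (x : N') = i (f x) := hkey x
    have h2 : π (j (x : N')) = e (f x) := by
      rw [h1]
      have : i (f x) = ((e (f x) : W) : (N' × S) ⧸ D) := by
        rw [he]
        exact (LinearEquiv.ofInjective_apply (f := i) (h := hiinj) (f x)).symm
      rw [this]
      exact Submodule.linearProjOfIsCompl_apply_left hcompl (e (f x))
    simp only [LinearMap.comp_apply, h2, LinearEquiv.coe_coe, LinearEquiv.symm_apply_apply]
end

section
/- Let R be a right SAP ring, M a right R-module, N a submodule of M with M/N finitely presented, and N₁ a maximal submodule of N. Then there exists a maximal submodule M₁ of M with N₁ = M₁ ∩ N. -/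
/-- Let `R` be a right SAP ring, `N ≤ M` right modules with `M/N` finitely presented, and
`N₁` a maximal submodule of `N`. Then there is a maximal submodule `M₁` of `M` with
`N₁ = M₁ ∩ N`. -/
theorem stmt11 (R : Type) [Ring R]
    (hSAP : ∀ (S : Type) [AddCommGroup S] [Module Rᵐᵒᵖ S],
      IsSimpleModule Rᵐᵒᵖ S → FPInjective Rᵐᵒᵖ S)
    (M : Type) [AddCommGroup M] [Module Rᵐᵒᵖ M] (N : Submodule Rᵐᵒᵖ M)
    (hfp : Module.FinitePresentation Rᵐᵒᵖ (M ⧸ N))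
    (N₁ : Submodule Rᵐᵒᵖ N) (hN₁ : IsCoatom N₁) :
    ∃ M₁ : Submodule Rᵐᵒᵖ M, IsCoatom M₁ ∧ Submodule.map N.subtype N₁ = M₁ ⊓ N := by
  have hsimple : IsSimpleModule Rᵐᵒᵖ (N ⧸ N₁) :=
    (isSimpleModule_iff_isCoatom).2 hN₁
  obtain ⟨g, hg⟩ := hSAP (N ⧸ N₁) hsimple M N hfp N₁.mkQ
  have hsurj : Function.Surjective g := by
    intro s
    obtain ⟨y, rfl⟩ := N₁.mkQ_surjective s
    exact ⟨y, hg y⟩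
  refine ⟨LinearMap.ker g, ?_, ?_⟩
  · rw [← isSimpleModule_iff_isCoatom]
    haveI := hsimple
    exact IsSimpleModule.congr (g.quotKerEquivOfSurjective hsurj)
  · ext x
    simp only [Submodule.mem_map, Submodule.mem_inf, LinearMap.mem_ker]
    constructor
    · rintro ⟨y, hy, rfl⟩
      refine ⟨?_, y.2⟩
      have := hg y
      rw [Submodule.mkQ_apply, (Submodule.Quotient.mk_eq_zero N₁).2 hy] at this
      simpa using this
    · rintro ⟨hgx, hx⟩
      refine ⟨⟨x, hx⟩, ?_, rfl⟩
      have := hg ⟨x, hx⟩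
      rw [Submodule.mkQ_apply] at this
      have h0 : Submodule.Quotient.mk (p := N₁) ⟨x, hx⟩ = 0 := by
        rw [← this]; exact hgx
      exact (Submodule.Quotient.mk_eq_zero N₁).1 h0
end

section
/- Over a right Noetherian ring, every absolutely pure (FP-injective) right module is injective. -/
/-- Over a right Noetherian ring, every absolutely pure (FP-injective) right module
is injective. -/
theorem stmt13 (R : Type) [Ring R] [IsNoetherianRing Rᵐᵒᵖ]
    (M : Type) [AddCommGroup M] [Module Rᵐᵒᵖ M] (h : FPInjective Rᵐᵒᵖ M) :
    Module.Injective Rᵐᵒᵖ M := by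
  apply Module.Baer.injective
  intro I g
  obtain ⟨g', hg'⟩ := h Rᵐᵒᵖ I (Module.finitePresentation_of_finite _ _) g
  exact ⟨g', fun x mem => hg' ⟨x, mem⟩⟩
end

section
/- Let M be a nonzero right R-module and x a nonzero element of M. Then there exists a two-sided ideal P of R maximal with respect to the property x ∉ x·P, and any such P is a prime ideal of R. -/
open MulOpposite

/-- `x·P`: the set of finite sums of elements `x * p`, `p ∈ P`, inside the right module `M`. -/
def xSMul {R : Type} [Ring R] {M : Type} [AddCommGroup M] [Module Rᵐᵒᵖ M]
    (x : M) (P : TwoSidedIdeal R) : Submodule Rᵐᵒᵖ M :=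
  Submodule.span Rᵐᵒᵖ {z : M | ∃ p ∈ P, z = op p • x}

/-- The set `{op p • x | p ∈ P}` is already a submodule. -/
def xsub {R : Type} [Ring R] {M : Type} [AddCommGroup M] [Module Rᵐᵒᵖ M]
    (x : M) (P : TwoSidedIdeal R) : Submodule Rᵐᵒᵖ M where
  carrier := {z : M | ∃ p ∈ P, z = op p • x}
  zero_mem' := ⟨0, P.zero_mem, by simp⟩
  add_mem' := by
    rintro a b ⟨p, hp, rfl⟩ ⟨q, hq, rfl⟩
    exact ⟨p + q, P.add_mem hp hq, by rw [op_add, add_smul]⟩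
  smul_mem' := by
    rintro r a ⟨p, hp, rfl⟩
    refine ⟨p * r.unop, P.mul_mem_right _ _ hp, ?_⟩
    rw [op_mul, op_unop, mul_smul]

lemma mem_xSMul {R : Type} [Ring R] {M : Type} [AddCommGroup M] [Module Rᵐᵒᵖ M]
    (x : M) (P : TwoSidedIdeal R) (z : M) :
    z ∈ xSMul x P ↔ ∃ p ∈ P, z = op p • x := by
  constructor
  · intro hz
    have : xSMul x P ≤ xsub x P := Submodule.span_le.mpr (fun w hw => hw)
    exact this hz
  · rintro ⟨p, hp, rfl⟩
    exact Submodule.subset_span ⟨p, hp, rfl⟩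

lemma mem_sup_tsi {R : Type} [Ring R] (A B : TwoSidedIdeal R) (z : R) (hz : z ∈ A ⊔ B) :
    ∃ a ∈ A, ∃ b ∈ B, z = a + b := by
  let T : TwoSidedIdeal R := TwoSidedIdeal.mk'
    {c : R | ∃ a ∈ A, ∃ b ∈ B, c = a + b}
    ⟨0, A.zero_mem, 0, B.zero_mem, by simp⟩
    (by rintro u v ⟨a, ha, b, hb, rfl⟩ ⟨a', ha', b', hb', rfl⟩
        exact ⟨a + a', A.add_mem ha ha', b + b', B.add_mem hb hb', by abel⟩)
    (by rintro u ⟨a, ha, b, hb, rfl⟩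
        exact ⟨-a, A.neg_mem ha, -b, B.neg_mem hb, by abel⟩)
    (by rintro u v ⟨a, ha, b, hb, rfl⟩
        exact ⟨u * a, A.mul_mem_left _ _ ha, u * b, B.mul_mem_left _ _ hb, by noncomm_ring⟩)
    (by rintro u v ⟨a, ha, b, hb, rfl⟩
        exact ⟨a * v, A.mul_mem_right _ _ ha, b * v, B.mul_mem_right _ _ hb, by noncomm_ring⟩)
  have hT : A ⊔ B ≤ T := by
    apply sup_le
    · intro a ha
      exact (TwoSidedIdeal.mem_mk' _ _ _ _ _ _ _).mpr ⟨a, ha, 0, B.zero_mem, by simp⟩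
    · intro b hb
      exact (TwoSidedIdeal.mem_mk' _ _ _ _ _ _ _).mpr ⟨0, A.zero_mem, b, hb, by simp⟩
  have := hT hz
  rwa [show T = _ from rfl, TwoSidedIdeal.mem_mk'] at this

/-- For a nonzero element `x` of a right module `M`, there is a two-sided ideal `P` maximal
with respect to `x ∉ x·P`, and any such `P` is prime. -/
theorem stmt15 (R : Type) [Ring R] (M : Type) [AddCommGroup M] [Module Rᵐᵒᵖ M]
    (x : M) (hx : x ≠ 0) :
    (∃ P : TwoSidedIdeal R, x ∉ xSMul x P ∧
        ∀ Q : TwoSidedIdeal R, x ∉ xSMul x Q → P ≤ Q → Q = P) ∧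
    (∀ P : TwoSidedIdeal R,
        (x ∉ xSMul x P ∧ ∀ Q : TwoSidedIdeal R, x ∉ xSMul x Q → P ≤ Q → Q = P) →
        IsPrimeTSI P) := by
  constructor
  · -- Existence via Zorn's lemma
    set S : Set (TwoSidedIdeal R) := {Q | x ∉ xSMul x Q} with hS
    have hbot : (⊥ : TwoSidedIdeal R) ∈ S := by
      intro hmem
      obtain ⟨p, hp, hxp⟩ := (mem_xSMul x ⊥ x).mp hmem
      rw [TwoSidedIdeal.mem_bot] at hp
      subst hp
      simp at hxp
      exact hx hxp
    have hchain : ∀ c ⊆ S, IsChain (· ≤ ·) c → ∀ y ∈ c,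
        ∃ ub ∈ S, ∀ z ∈ c, z ≤ ub := by
      intro c hcS hc y hy
      -- union of the chain
      let U : TwoSidedIdeal R := TwoSidedIdeal.mk'
        (⋃ P ∈ c, (P : Set R))
        (by refine Set.mem_biUnion hy ?_; exact y.zero_mem)
        (by rintro u v hu hv
            simp only [Set.mem_iUnion, SetLike.mem_coe] at hu hv ⊢
            obtain ⟨P, hP, hu⟩ := hu
            obtain ⟨Q, hQ, hv⟩ := hv
            rcases hc.total hP hQ with h | h
            · exact ⟨Q, hQ, Q.add_mem (h hu) hv⟩
            · exact ⟨P, hP, P.add_mem hu (h hv)⟩)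
        (by rintro u hu
            simp only [Set.mem_iUnion, SetLike.mem_coe] at hu ⊢
            obtain ⟨P, hP, hu⟩ := hu
            exact ⟨P, hP, P.neg_mem hu⟩)
        (by rintro u v hv
            simp only [Set.mem_iUnion, SetLike.mem_coe] at hv ⊢
            obtain ⟨P, hP, hv⟩ := hv
            exact ⟨P, hP, P.mul_mem_left _ _ hv⟩)
        (by rintro u v hu
            simp only [Set.mem_iUnion, SetLike.mem_coe] at hu ⊢
            obtain ⟨P, hP, hu⟩ := hu
            exact ⟨P, hP, P.mul_mem_right _ _ hu⟩)
      refine ⟨U, ?_, ?_⟩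
      · intro hmem
        obtain ⟨p, hp, hxp⟩ := (mem_xSMul x U x).mp hmem
        rw [TwoSidedIdeal.mem_mk'] at hp
        simp only [Set.mem_iUnion, SetLike.mem_coe] at hp
        obtain ⟨P, hP, hp⟩ := hp
        exact hcS hP ((mem_xSMul x P x).mpr ⟨p, hp, hxp⟩)
      · intro z hz r hr
        rw [TwoSidedIdeal.mem_mk']
        exact Set.mem_biUnion hz hr
    obtain ⟨P, -, hPS, hPmax⟩ := zorn_le_nonempty₀ S hchain ⊥ hbot
    exact ⟨P, hPS, fun Q hQ hPQ => le_antisymm (hPmax hQ hPQ) hPQ⟩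
  · -- Maximality implies primeness
    rintro P ⟨hxP, hmax⟩
    constructor
    · rintro rfl
      exact hxP ((mem_xSMul x ⊤ x).mpr ⟨1, trivial, by simp⟩)
    · intro A B hAB
      by_contra hcon
      push_neg at hcon
      obtain ⟨hA, hB⟩ := hcon
      -- x ∈ x·(P ⊔ A)
      have hxA : x ∈ xSMul x (P ⊔ A) := by
        by_contra h
        have := hmax (P ⊔ A) h le_sup_left
        exact hA (le_sup_right.trans this.le)
      have hxB : x ∈ xSMul x (P ⊔ B) := by
        by_contra h
        have := hmax (P ⊔ B) h le_sup_left
        exact hB (le_sup_right.trans this.le)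
      obtain ⟨a, ha, hxa⟩ := (mem_xSMul x _ x).mp hxA
      obtain ⟨b, hb, hxb⟩ := (mem_xSMul x _ x).mp hxB
      obtain ⟨p, hp, a', ha', rfl⟩ := mem_sup_tsi P A a ha
      obtain ⟨q, hq, b', hb', rfl⟩ := mem_sup_tsi P B b hb
      have hab : (p + a') * (q + b') ∈ P := by
        have h1 : p * (q + b') ∈ P := P.mul_mem_right _ _ hp
        have h2 : a' * q ∈ P := P.mul_mem_left _ _ hq
        have h3 : a' * b' ∈ P := hAB (TwoSidedIdeal.subset_span ⟨a', ha', b', hb', rfl⟩)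
        have : (p + a') * (q + b') = p * (q + b') + a' * q + a' * b' := by noncomm_ring
        rw [this]
        exact P.add_mem (P.add_mem h1 h2) h3
      apply hxP
      refine (mem_xSMul x P x).mpr ⟨(p + a') * (q + b'), hab, ?_⟩
      calc x = op (q + b') • x := hxb
        _ = op (q + b') • (op (p + a') • x) := by rw [← hxa]
        _ = op ((p + a') * (q + b')) • x := by rw [op_mul, mul_smul]
end

section
/- Let R be a right SAP ring and S a simple right R-module with annihilator P. If every short exact sequence 0 → S → M → S → 0 of R/P-modules splits, then every short exact sequence 0 → S → M → S → 0 of R-modules splits (i.e., Ext^1_R(S, S) = 0). -/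
/-- Let `R` be a right SAP ring and `S` a simple right `R`-module with annihilator `P`.
If every short exact sequence `0 → S → M → S → 0` with `M` killed by `P` (i.e. a sequence of
`R/P`-modules) splits, then every short exact sequence `0 → S → M → S → 0` of `R`-modules
splits, i.e. `Ext¹_R(S, S) = 0`. -/
theorem stmt16 (R : Type) [Ring R]
    (hSAP : ∀ (T : Type) [AddCommGroup T] [Module Rᵐᵒᵖ T],
      IsSimpleModule Rᵐᵒᵖ T → FPInjective Rᵐᵒᵖ T)
    (S : Type) [AddCommGroup S] [Module Rᵐᵒᵖ S] (hS : IsSimpleModule Rᵐᵒᵖ S)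
    (hsplit : ∀ (M : Type) [AddCommGroup M] [Module Rᵐᵒᵖ M]
      (i : S →ₗ[Rᵐᵒᵖ] M) (p : M →ₗ[Rᵐᵒᵖ] S),
        Function.Injective i → Function.Surjective p → LinearMap.range i = LinearMap.ker p →
        Module.annihilator Rᵐᵒᵖ S ≤ Module.annihilator Rᵐᵒᵖ M →
        ∃ r : M →ₗ[Rᵐᵒᵖ] S, r ∘ₗ i = LinearMap.id) :
    ∀ (M : Type) [AddCommGroup M] [Module Rᵐᵒᵖ M]
      (i : S →ₗ[Rᵐᵒᵖ] M) (p : M →ₗ[Rᵐᵒᵖ] S),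
        Function.Injective i → Function.Surjective p → LinearMap.range i = LinearMap.ker p →
        ∃ r : M →ₗ[Rᵐᵒᵖ] S, r ∘ₗ i = LinearMap.id := by
  intro M _ _ i p hi hp hip
  apply hsplit M i p hi hp hip
  -- It suffices to show `Ann S ≤ Ann M`, i.e. `a • m = 0` for `a ∈ Ann S`, `m : M`.
  intro a ha
  rw [Module.mem_annihilator]
  intro m
  -- The left ideal generated by `a` (a right ideal of `R`).
  set L : Submodule Rᵐᵒᵖ Rᵐᵒᵖ := Submodule.span Rᵐᵒᵖ {a} with hLdef
  have hLP : L ≤ Module.annihilator Rᵐᵒᵖ S := by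
    rw [hLdef, Submodule.span_le, Set.singleton_subset_iff]; exact ha
  -- The map `L → M`, `x ↦ x • m`, lands in `range i = ker p`.
  have hmem : ∀ x : L, (LinearMap.toSpanSingleton Rᵐᵒᵖ M m).comp L.subtype x
      ∈ LinearMap.range i := by
    intro x
    rw [hip, LinearMap.mem_ker]
    have : (x : Rᵐᵒᵖ) ∈ Module.annihilator Rᵐᵒᵖ S := hLP x.2
    rw [Module.mem_annihilator] at this
    simp only [LinearMap.comp_apply, Submodule.subtype_apply,
      LinearMap.toSpanSingleton_apply, map_smul]
    exact this (p m)
  -- So it factors through `S` via the isomorphism `S ≃ range i`.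
  let e := LinearEquiv.ofInjective i hi
  let f : L →ₗ[Rᵐᵒᵖ] S := e.symm.toLinearMap ∘ₗ
    ((LinearMap.toSpanSingleton Rᵐᵒᵖ M m).comp L.subtype).codRestrict (LinearMap.range i) hmem
  have hfL : ∀ x : L, i (f x) = (x : Rᵐᵒᵖ) • m := by
    intro x
    have : (i (f x) : M) = ((e (f x) : LinearMap.range i) : M) := rfl
    rw [this]
    show ((e (e.symm _) : LinearMap.range i) : M) = _
    rw [e.apply_symm_apply]
    rfl
  -- `Rᵐᵒᵖ ⧸ L` is finitely presented.
  have hfp : Module.FinitePresentation Rᵐᵒᵖ (Rᵐᵒᵖ ⧸ L) := by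
    apply Module.finitePresentation_of_surjective L.mkQ (Submodule.mkQ_surjective L)
    rw [Submodule.ker_mkQ, hLdef]
    exact Submodule.fg_span (Set.finite_singleton a)
  -- Extend `f` to `g : Rᵐᵒᵖ → S` by FP-injectivity of `S`.
  obtain ⟨g, hg⟩ := hSAP S hS Rᵐᵒᵖ L hfp f
  have haL : a ∈ L := Submodule.mem_span_singleton_self a
  have h1 : g a = a • g 1 := by
    conv_lhs => rw [show a = a • (1 : Rᵐᵒᵖ) by simp]
    rw [map_smul]
  have h2 : a • g 1 = 0 := by
    rw [Module.mem_annihilator] at ha; exact ha (g 1)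
  have h3 : f ⟨a, haL⟩ = 0 := by
    rw [← hg ⟨a, haL⟩]
    show g a = 0
    rw [h1, h2]
  have := hfL ⟨a, haL⟩
  rw [h3, map_zero] at this
  exact this.symm
end

section
/- Let R be a right SAP ring, and let S₁, S₂ be non-isomorphic simple right R-modules whose annihilator ideals P₁ = Ann(S₁) and P₂ = Ann(S₂) are comaximal (P₁ + P₂ = R). Then every R-module homomorphism from the injective hull E(S₁) to the injective hull E(S₂) is zero. -/
/-- Purity consequence of FP-injectivity: if `i s` is a combination `∑ aⱼ • xⱼ` in `E`,
then `s` is a combination of the same coefficients with entries from `S`. -/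
lemma purity_lemma {A : Type} [Ring A] {S E : Type} [AddCommGroup S] [Module A S]
    [AddCommGroup E] [Module A E] (hFP : FPInjective A S)
    (i : S →ₗ[A] E) (hinj : Function.Injective i)
    {n : ℕ} (a : Fin n → A) (x : Fin n → E) (s : S)
    (hs : i s = ∑ j, a j • x j) : ∃ y : Fin n → S, s = ∑ j, a j • y j := by
  classical
  set ψ : A →ₗ[A] (Fin n → A) := LinearMap.toSpanSingleton A _ a with hψ
  set σ : A →ₗ[A] S := LinearMap.toSpanSingleton A S s with hσ
  have hker : LinearMap.ker ψ ≤ LinearMap.ker σ := by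
    intro r hr
    rw [LinearMap.mem_ker] at hr ⊢
    have hcomp : ∀ j, r * a j = 0 := fun j => congrFun hr j
    have : i (σ r) = 0 := by
      rw [hσ, LinearMap.toSpanSingleton_apply, map_smul, hs, Finset.smul_sum]
      refine Finset.sum_eq_zero fun j _ => ?_
      rw [smul_smul, hcomp j, zero_smul]
    exact hinj (by rw [this, map_zero])
  set L : Submodule A (Fin n → A) := LinearMap.range ψ with hL
  have hLfg : L.FG := by
    rw [hL, ← LinearMap.span_singleton_eq_range]
    exact Submodule.fg_span_singleton a
  have hFPq : Module.FinitePresentation A ((Fin n → A) ⧸ L) :=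
    Module.finitePresentation_of_surjective L.mkQ (Submodule.mkQ_surjective L)
      (by rwa [Submodule.ker_mkQ])
  set σ' : (A ⧸ LinearMap.ker ψ) →ₗ[A] S := (LinearMap.ker ψ).liftQ σ hker with hσ'
  set e : (A ⧸ LinearMap.ker ψ) ≃ₗ[A] L := ψ.quotKerEquivRange with he
  obtain ⟨g, hg⟩ := hFP (Fin n → A) L hFPq (σ'.comp e.symm.toLinearMap)
  refine ⟨fun j => g (fun k => if j = k then (1:A) else 0), ?_⟩
  have hmem : a ∈ L := ⟨1, by simp [hψ]⟩
  have h1 : g a = s := by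
    have := hg ⟨a, hmem⟩
    rw [LinearMap.comp_apply] at this
    have hsym : e.symm ⟨a, hmem⟩ = Submodule.Quotient.mk 1 := by
      rw [LinearEquiv.symm_apply_eq]
      refine Subtype.ext ?_
      rw [LinearMap.quotKerEquivRange_apply_mk]
      simp [hψ]
    simp only [LinearEquiv.coe_coe] at this
    rw [hsym] at this
    simpa [σ', hσ] using this
  calc s = g a := h1.symm
    _ = g (∑ j, a j • fun k => if j = k then (1:A) else 0) := by
        congr 1; exact pi_eq_sum_univ a
    _ = ∑ j, a j • g (fun k => if j = k then (1:A) else 0) := by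
        rw [map_sum]; exact Finset.sum_congr rfl fun j _ => map_smul g _ _

/-- Over a right SAP ring, if `S₁`, `S₂` are non-isomorphic simple right modules with
comaximal annihilators, then every homomorphism `E(S₁) → E(S₂)` between their injective
hulls is zero. -/
theorem stmt17 (R : Type) [Ring R]
    (hSAP : ∀ (T : Type) [AddCommGroup T] [Module Rᵐᵒᵖ T],
      IsSimpleModule Rᵐᵒᵖ T → FPInjective Rᵐᵒᵖ T)
    (S₁ S₂ : Type) [AddCommGroup S₁] [Module Rᵐᵒᵖ S₁] [AddCommGroup S₂] [Module Rᵐᵒᵖ S₂]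
    (h₁ : IsSimpleModule Rᵐᵒᵖ S₁) (h₂ : IsSimpleModule Rᵐᵒᵖ S₂)
    (hiso : IsEmpty (S₁ ≃ₗ[Rᵐᵒᵖ] S₂))
    (hcomax : Module.annihilator Rᵐᵒᵖ S₁ ⊔ Module.annihilator Rᵐᵒᵖ S₂ = ⊤)
    (E₁ E₂ : Type) [AddCommGroup E₁] [Module Rᵐᵒᵖ E₁] [AddCommGroup E₂] [Module Rᵐᵒᵖ E₂]
    (i₁ : S₁ →ₗ[Rᵐᵒᵖ] E₁) (i₂ : S₂ →ₗ[Rᵐᵒᵖ] E₂)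
    (hE₁ : IsInjectiveHull Rᵐᵒᵖ i₁) (hE₂ : IsInjectiveHull Rᵐᵒᵖ i₂) :
    ∀ f : E₁ →ₗ[Rᵐᵒᵖ] E₂, f = 0 := by
  classical
  set A := Rᵐᵒᵖ
  set P₁ := Module.annihilator A S₁ with hP₁
  -- The submodule P₁ • E₁
  set K : Submodule A E₁ :=
    Submodule.span A {e : E₁ | ∃ c ∈ P₁, ∃ z : E₁, c • z = e} with hK
  -- K = ⊥, i.e. P₁ annihilates E₁
  have hKbot : K = ⊥ := by
    by_contra hKne
    obtain ⟨w, hw, hwne⟩ := Submodule.ne_bot_iff _ |>.mp (hE₁.2.2 K hKne)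
    obtain ⟨hw1, hw2⟩ := Submodule.mem_inf.mp hw
    obtain ⟨s, rfl⟩ := hw1
    rw [hK] at hw2
    obtain ⟨m, r, v, hv⟩ := Submodule.mem_span_set'.mp hw2
    choose c hc z hz using fun k => (v k).2
    have hrep : i₁ s = ∑ k, (r k * c k) • z k := by
      rw [← hv]
      refine Finset.sum_congr rfl fun k _ => ?_
      rw [← hz k, smul_smul]
    obtain ⟨y, hy⟩ := purity_lemma (hSAP S₁ h₁) i₁ hE₁.2.1 _ _ s hrep
    have hs0 : s = 0 := by
      rw [hy]
      refine Finset.sum_eq_zero fun k _ => ?_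
      have hmem : r k * c k ∈ P₁ := Ideal.mul_mem_left _ _ (hc k)
      exact Module.mem_annihilator.mp hmem (y k)
    exact hwne (by rw [hs0, map_zero])
  intro f
  by_contra hfne
  -- range f is a nonzero submodule of E₂
  have hrange : LinearMap.range f ≠ ⊥ := by
    intro h
    exact hfne (LinearMap.ext fun x => by
      have : f x ∈ (⊥ : Submodule A E₂) := h ▸ LinearMap.mem_range_self f x
      simpa using this)
  obtain ⟨w, hw, hwne⟩ := Submodule.ne_bot_iff _ |>.mp (hE₂.2.2 _ hrange)
  obtain ⟨hw1, hw2⟩ := Submodule.mem_inf.mp hw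
  obtain ⟨s₂, rfl⟩ := hw1
  obtain ⟨x₀, hx₀⟩ := hw2
  -- comaximality: 1 = p₁ + p₂
  have h1mem : (1 : A) ∈ P₁ ⊔ Module.annihilator A S₂ := hcomax ▸ Submodule.mem_top
  obtain ⟨p₁, hp₁, p₂, hp₂, hsum⟩ := Submodule.mem_sup.mp h1mem
  -- p₁ • x₀ = 0 since it lies in K = ⊥
  have hp₁x : p₁ • x₀ = 0 := by
    have : p₁ • x₀ ∈ K := Submodule.subset_span ⟨p₁, hp₁, x₀, rfl⟩
    rwa [hKbot, Submodule.mem_bot] at this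
  -- s₂ = p₁ • s₂
  have hs₂ : p₁ • s₂ = s₂ := by
    have hp₂s : p₂ • s₂ = 0 := Module.mem_annihilator.mp hp₂ s₂
    calc p₁ • s₂ = p₁ • s₂ + p₂ • s₂ := by rw [hp₂s, add_zero]
      _ = (p₁ + p₂) • s₂ := (add_smul p₁ p₂ s₂).symm
      _ = s₂ := by rw [hsum, one_smul]
  -- conclude i₂ s₂ = 0, contradiction
  have : i₂ s₂ = 0 := by
    calc i₂ s₂ = i₂ (p₁ • s₂) := by rw [hs₂]
      _ = p₁ • i₂ s₂ := map_smul i₂ p₁ s₂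
      _ = p₁ • f x₀ := by rw [hx₀]
      _ = f (p₁ • x₀) := (map_smul f p₁ x₀).symm
      _ = 0 := by rw [hp₁x, map_zero]
  exact hwne this
end

section
/- Let R be a semiprime right self-injective ring whose right socle S is an essential right ideal. Then S is pure as a left submodule of R (i.e., L·S = L ∩ S for every right ideal L, using that S is a sum of idempotent-generated left ideals). -/
/-- The right socle of `R`: the sum of all simple right ideals. -/
def rightSocle (R : Type) [Ring R] : Submodule Rᵐᵒᵖ R :=
  sSup {N : Submodule Rᵐᵒᵖ R | IsSimpleModule Rᵐᵒᵖ N}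

namespace Stmt19Aux

open MulOpposite

variable {R : Type} [Ring R]

/-- Right multiplication by `c`, as an endomorphism of `R` as a left `R`-module. -/
def rmul (c : R) : R →ₗ[R] R where
  toFun x := x * c
  map_add' x y := add_mul x y c
  map_smul' m x := by simp only [smul_eq_mul, RingHom.id_apply, mul_assoc]

/-- Left multiplication by `c`, as an endomorphism of `R` as a right `R`-module. -/
def lmul (c : R) : R →ₗ[Rᵐᵒᵖ] R where
  toFun x := c * x
  map_add' := mul_add c
  map_smul' m x := (mul_assoc c x m.unop).symm

@[simp] lemma rmul_apply (c x : R) : rmul c x = x * c := rfl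
@[simp] lemma lmul_apply (c x : R) : lmul c x = c * x := rfl

lemma mem_spanR {a x : R} : x ∈ Submodule.span R {a} ↔ ∃ c, c * a = x := by
  rw [Submodule.mem_span_singleton]; rfl

lemma mem_spanOp {a x : R} : x ∈ Submodule.span Rᵐᵒᵖ {a} ↔ ∃ c : R, a * c = x := by
  rw [Submodule.mem_span_singleton]
  exact ⟨fun ⟨c, h⟩ => ⟨c.unop, h⟩, fun ⟨c, h⟩ => ⟨MulOpposite.op c, h⟩⟩

lemma eq_of_atom {α : Type*} [PartialOrder α] [OrderBot α] {N K : α}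
    (h : IsAtom N) (hle : K ≤ N) (hne : K ≠ ⊥) : K = N := by
  rcases hle.lt_or_eq with hlt | he
  · exact absurd (h.2 _ hlt) hne
  · exact he

/-- The image of an atom under a linear map is `⊥` or an atom. -/
lemma map_atom {A M M' : Type*} [Ring A] [AddCommGroup M] [Module A M]
    [AddCommGroup M'] [Module A M'] (f : M →ₗ[A] M') {N : Submodule A M}
    (hN : IsAtom N) (h : Submodule.map f N ≠ ⊥) : IsAtom (Submodule.map f N) := by
  refine ⟨h, fun K hK => ?_⟩
  by_contra hKne
  obtain ⟨k, hkK, hk0⟩ := Submodule.ne_bot_iff K |>.mp hKne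
  obtain ⟨m, hmN, hmk⟩ := hK.le hkK
  have hm0 : m ≠ 0 := by rintro rfl; simp only [map_zero] at hmk; exact hk0 hmk.symm
  have h1 : Submodule.comap f K ⊓ N ≠ ⊥ := by
    intro hb
    have : m ∈ Submodule.comap f K ⊓ N := ⟨by simpa [hmk] using hkK, hmN⟩
    rw [hb] at this
    exact hm0 (Submodule.mem_bot _ |>.mp this)
  have h2 : Submodule.comap f K ⊓ N = N := eq_of_atom hN inf_le_right h1
  have h3 : N ≤ Submodule.comap f K := by rw [← h2]; exact inf_le_left
  exact absurd (le_antisymm hK.le (Submodule.map_le_iff_le_comap.mpr h3)) hK.ne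

/-- Semiprimeness in elementwise form. -/
lemma hsp_of (hsemiprime : ∀ I : TwoSidedIdeal R, tsiMul I I = ⊥ → I = ⊥) :
    ∀ a : R, (∀ r, a * r * a = 0) → a = 0 := by
  intro a ha
  set I := TwoSidedIdeal.span {a} with hI
  have hT2 : ∀ y ∈ I, ∀ r : R, a * r * y = 0 := by
    have hsub : ({a} : Set R) ⊆ (TwoSidedIdeal.mk' {y : R | ∀ r, a * r * y = 0}
        (by simp) (fun hx hy r => by rw [mul_add, ← mul_add]; simp [mul_add, hx r, hy r])
        (fun hx r => by simp [hx r])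
        (fun {x y} hy r => by
          have := hy (r * x)
          calc a * r * (x * y) = a * (r * x) * y := by rw [mul_assoc a r, mul_assoc, mul_assoc]
          _ = 0 := this)
        (fun {x y} hx r => by rw [← mul_assoc, hx r, zero_mul]) : TwoSidedIdeal R) := by
      intro z hz
      rcases hz with rfl
      simpa using ha
    intro y hy
    have := TwoSidedIdeal.mem_span_iff.mp hy _ hsub
    simpa using this
  have hT1 : ∀ x ∈ I, ∀ y ∈ I, ∀ r : R, x * r * y = 0 := by
    have hsub : ({a} : Set R) ⊆ (TwoSidedIdeal.mk' {x : R | ∀ y ∈ I, ∀ r, x * r * y = 0}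
        (by simp) (fun hx hy z hz r => by rw [add_mul, add_mul, hx z hz r, hy z hz r, add_zero])
        (fun hx z hz r => by simp [hx z hz r])
        (fun {s x} hx z hz r => by rw [mul_assoc s x, mul_assoc s, hx z hz r, mul_zero])
        (fun {x s} hx z hz r => by
          calc x * s * r * z = x * (s * r) * z := by rw [mul_assoc x s r]
          _ = 0 := hx z hz (s * r)) :
        TwoSidedIdeal R) := by
      intro z hz
      rcases hz with rfl
      simpa using hT2
    intro x hx
    have := TwoSidedIdeal.mem_span_iff.mp hx _ hsub
    simpa using this
  have hbot : tsiMul I I = ⊥ := by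
    refine le_antisymm ?_ bot_le
    intro z hz
    have := TwoSidedIdeal.mem_span_iff.mp hz ⊥ ?_
    · exact this
    · rintro w ⟨b, hb, c, hc, rfl⟩
      have : b * c = 0 := by simpa using hT1 b hb c hc 1
      simp [this]
  have := hsemiprime I hbot
  have haI : a ∈ I := TwoSidedIdeal.subset_span rfl
  rw [this] at haI
  simpa using haI

variable (hsp : ∀ a : R, (∀ r, a * r * a = 0) → a = 0)

section SP
include hsp

/-- Brauer's lemma, right version: a minimal right ideal of a semiprime ring is `eR`. -/
lemma brauer_right {N : Submodule Rᵐᵒᵖ R} (hN : IsAtom N) :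
    ∃ e : R, e * e = e ∧ N = Submodule.span Rᵐᵒᵖ {e} := by
  obtain ⟨x, hxN, hx0⟩ := Submodule.ne_bot_iff N |>.mp hN.1
  have hprod : ∃ a ∈ N, ∃ b ∈ N, a * b ≠ 0 := by
    by_contra hc
    push_neg at hc
    refine hx0 (hsp x fun r => ?_)
    exact hc _ (N.smul_mem (op r) hxN) _ hxN
  obtain ⟨a, haN, b, hbN, hab⟩ := hprod
  have ha0 : a ≠ 0 := by rintro rfl; simp at hab
  have hmap : Submodule.map (lmul a) N = N := by
    refine eq_of_atom hN ?_ ?_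
    · rintro _ ⟨n, hn, rfl⟩
      exact N.smul_mem (op n) haN
    · intro hb0
      have : a * b ∈ Submodule.map (lmul a) N := ⟨b, hbN, rfl⟩
      rw [hb0] at this
      exact hab (Submodule.mem_bot _ |>.mp this)
  obtain ⟨e, heN, hae⟩ : ∃ e ∈ N, a * e = a := by
    have : a ∈ Submodule.map (lmul a) N := by rw [hmap]; exact haN
    rcases this with ⟨e, heN, he⟩
    exact ⟨e, heN, he⟩
  have hann : N ⊓ LinearMap.ker (lmul a) = ⊥ := by
    refine hN.2 _ (lt_of_le_of_ne inf_le_left fun hcon => ?_)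
    have : b ∈ N ⊓ LinearMap.ker (lmul a) := by rw [hcon]; exact hbN
    exact hab this.2
  have he2 : e * e = e := by
    have h1 : e * e - e ∈ N ⊓ LinearMap.ker (lmul a) := by
      refine ⟨sub_mem (N.smul_mem (op e) heN) heN, ?_⟩
      show a * (e * e - e) = 0
      have h2 : a * (e * e) = a := by rw [← mul_assoc, hae, hae]
      rw [mul_sub, h2, hae, sub_self]
    rw [hann, Submodule.mem_bot, sub_eq_zero] at h1
    exact h1
  have he0 : e ≠ 0 := by rintro rfl; rw [mul_zero] at hae; exact ha0 hae.symm
  refine ⟨e, he2, ?_⟩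
  refine (eq_of_atom hN ?_ ?_).symm
  · rw [Submodule.span_le, Set.singleton_subset_iff]; exact heN
  · rw [Ne, Submodule.span_singleton_eq_bot]; exact he0

/-- Brauer's lemma, left version. -/
lemma brauer_left {M : Submodule R R} (hM : IsAtom M) :
    ∃ e : R, e * e = e ∧ M = Submodule.span R {e} := by
  obtain ⟨x, hxM, hx0⟩ := Submodule.ne_bot_iff M |>.mp hM.1
  have hprod : ∃ a ∈ M, ∃ b ∈ M, b * a ≠ 0 := by
    by_contra hc
    push_neg at hc
    refine hx0 (hsp x fun r => ?_)
    rw [mul_assoc]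
    exact hc _ (M.smul_mem r hxM) _ hxM
  obtain ⟨a, haM, b, hbM, hab⟩ := hprod
  have ha0 : a ≠ 0 := by rintro rfl; simp at hab
  have hmap : Submodule.map (rmul a) M = M := by
    refine eq_of_atom hM ?_ ?_
    · rintro _ ⟨m, hm, rfl⟩
      exact M.smul_mem m haM
    · intro hb0
      have : b * a ∈ Submodule.map (rmul a) M := ⟨b, hbM, rfl⟩
      rw [hb0] at this
      exact hab (Submodule.mem_bot _ |>.mp this)
  obtain ⟨e, heM, hea⟩ : ∃ e ∈ M, e * a = a := by
    have : a ∈ Submodule.map (rmul a) M := by rw [hmap]; exact haM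
    rcases this with ⟨e, heM, he⟩
    exact ⟨e, heM, he⟩
  have hann : M ⊓ LinearMap.ker (rmul a) = ⊥ := by
    refine hM.2 _ (lt_of_le_of_ne inf_le_left fun hcon => ?_)
    have : b ∈ M ⊓ LinearMap.ker (rmul a) := by rw [hcon]; exact hbM
    exact hab this.2
  have he2 : e * e = e := by
    have h1 : e * e - e ∈ M ⊓ LinearMap.ker (rmul a) := by
      refine ⟨sub_mem (M.smul_mem e heM) heM, ?_⟩
      show (e * e - e) * a = 0
      have h2 : e * e * a = a := by rw [mul_assoc, hea, hea]
      rw [sub_mul, h2, hea, sub_self]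
    rw [hann, Submodule.mem_bot, sub_eq_zero] at h1
    exact h1
  have he0 : e ≠ 0 := by rintro rfl; rw [zero_mul] at hea; exact ha0 hea.symm
  refine ⟨e, he2, ?_⟩
  refine (eq_of_atom hM ?_ ?_).symm
  · rw [Submodule.span_le, Set.singleton_subset_iff]; exact heM
  · rw [Ne, Submodule.span_singleton_eq_bot]; exact he0

end SP

/-- In the corner ring `eRe` of a minimal right ideal `eR`, nonzero elements are invertible. -/
lemma corner_inv {e : R} (he : e * e = e) (hatom : IsAtom (Submodule.span Rᵐᵒᵖ {e})) :
    ∀ a : R, a = e * a * e → a ≠ 0 → ∃ b : R, b = e * b * e ∧ a * b = e ∧ b * a = e := by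
  have he0 : e ≠ 0 := by
    intro h
    apply hatom.1
    rw [h, Submodule.span_singleton_eq_bot]
  have rinv : ∀ a : R, a = e * a * e → a ≠ 0 → ∃ b : R, b = e * b * e ∧ a * b = e := by
    intro a hae ha0
    have hspan : Submodule.span Rᵐᵒᵖ {a} = Submodule.span Rᵐᵒᵖ {e} := by
      refine eq_of_atom hatom ?_ ?_
      · rw [Submodule.span_le, Set.singleton_subset_iff]
        exact mem_spanOp.mpr ⟨a * e, by rw [← mul_assoc, ← hae]⟩
      · rw [Ne, Submodule.span_singleton_eq_bot]; exact ha0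
    have heA : e ∈ Submodule.span Rᵐᵒᵖ {a} := by
      rw [hspan]; exact Submodule.mem_span_singleton_self e
    obtain ⟨r, hr⟩ := mem_spanOp.mp heA
    have hAe : a * e = a := by
      calc a * e = (e * a * e) * e := by rw [← hae]
        _ = e * a * (e * e) := by rw [mul_assoc (e * a) e e]
        _ = e * a * e := by rw [he]
        _ = a := hae.symm
    refine ⟨e * r * e, ?_, ?_⟩
    · rw [← mul_assoc, ← mul_assoc, he, mul_assoc (e*r) e e, he]
    · calc a * (e * r * e) = (a * e) * r * e := by rw [← mul_assoc, ← mul_assoc]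
        _ = e * e := by rw [hAe, hr]
        _ = e := he
  intro a hae ha0
  obtain ⟨b, hbe, hab⟩ := rinv a hae ha0
  have hb0 : b ≠ 0 := by rintro rfl; rw [mul_zero] at hab; exact he0 hab.symm
  obtain ⟨c, hce, hbc⟩ := rinv b hbe hb0
  have hAe : a * e = a := by
    calc a * e = (e * a * e) * e := by rw [← hae]
      _ = e * a * (e * e) := by rw [mul_assoc (e * a) e e]
      _ = e * a * e := by rw [he]
      _ = a := hae.symm
  have hEc : e * c = c := by
    calc e * c = e * (e * c * e) := by rw [← hce]
      _ = e * e * c * e := by rw [← mul_assoc, ← mul_assoc]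
      _ = e * c * e := by rw [he]
      _ = c := hce.symm
  have hac : a = c := by
    calc a = a * e := hAe.symm
      _ = a * (b * c) := by rw [hbc]
      _ = (a * b) * c := by rw [mul_assoc]
      _ = e * c := by rw [hab]
      _ = c := hEc
  refine ⟨b, hbe, hab, ?_⟩
  rw [hac]; exact hbc

section SP2
include hsp

/-- The flip lemma: in a semiprime ring, if `eR` is a minimal right ideal
then `Re` is a minimal left ideal. -/
lemma flip_atom {e : R} (he : e * e = e) (hatom : IsAtom (Submodule.span Rᵐᵒᵖ {e})) :
    IsAtom (Submodule.span R {e}) := by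
  have he0 : e ≠ 0 := by
    intro h
    apply hatom.1
    rw [h, Submodule.span_singleton_eq_bot]
  constructor
  · rw [Ne, Submodule.span_singleton_eq_bot]; exact he0
  · intro K hK
    by_contra hKbot
    obtain ⟨x, hxK, hx0⟩ := Submodule.ne_bot_iff K |>.mp hKbot
    obtain ⟨s, hs⟩ := mem_spanR.mp (hK.le hxK)
    have hxe : x * e = x := by rw [← hs, mul_assoc, he]
    obtain ⟨r, hr⟩ : ∃ r, x * r * x ≠ 0 := by
      by_contra hc
      push_neg at hc
      exact hx0 (hsp x hc)
    set v := e * (r * x) with hv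
    have hve : v * e = v := by rw [hv, mul_assoc, mul_assoc, hxe]
    have hev : e * v = v := by rw [hv, ← mul_assoc, he]
    have hvev : v = e * v * e := by rw [hev, hve]
    have hv0 : v ≠ 0 := by
      intro h0
      apply hr
      have hxv : x * v = x * r * x := by
        rw [hv, ← mul_assoc, hxe, ← mul_assoc]
      rw [← hxv, h0, mul_zero]
    obtain ⟨b, hbe, hab, hba⟩ := corner_inv he hatom v hvev hv0
    have heK : e ∈ K := by
      have hbx : (b * e * r) * x = e := by
        rw [mul_assoc (b * e) r x, mul_assoc b e (r * x), ← hv, hba]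
      have := K.smul_mem (b * e * r) hxK
      rw [show (b * e * r) • x = (b * e * r) * x from rfl, hbx] at this
      exact this
    have : Submodule.span R {e} ≤ K := by
      rw [Submodule.span_le, Set.singleton_subset_iff]; exact heK
    exact absurd (le_antisymm hK.le this) hK.ne

/-- Merge step: the sum of an idempotent-generated left ideal and a minimal left ideal
is idempotent-generated. -/
lemma step_merge {e : R} (he : e * e = e) {M : Submodule R R} (hM : IsAtom M) :
    ∃ g : R, g * g = g ∧ Submodule.span R {g} = Submodule.span R {e} ⊔ M := by
  by_cases hle : M ≤ Submodule.span R {e}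
  · exact ⟨e, he, (sup_eq_left.mpr hle).symm⟩
  · have hmap : Submodule.map (rmul (1 - e)) M ≠ ⊥ := by
      intro hb
      apply hle
      intro m hm
      have h0 : m * (1 - e) = 0 := by
        have : rmul (1 - e) m ∈ Submodule.map (rmul (1 - e)) M :=
          Submodule.mem_map_of_mem hm
        rw [hb] at this
        exact Submodule.mem_bot _ |>.mp this
      rw [mul_sub, mul_one, sub_eq_zero] at h0
      exact mem_spanR.mpr ⟨m, h0.symm⟩
    have hatom' := map_atom (rmul (1 - e)) hM hmap
    obtain ⟨h, hh2, hMh⟩ := brauer_left hsp hatom'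
    have hhe : h * e = 0 := by
      have : h ∈ Submodule.map (rmul (1 - e)) M := by
        rw [hMh]; exact Submodule.mem_span_singleton_self h
      rcases this with ⟨m, _, rfl⟩
      show m * (1 - e) * e = 0
      rw [mul_assoc, sub_mul, one_mul, he, sub_self, mul_zero]
    have hge : e * (e + h - e * h) = e := by
      rw [mul_sub, mul_add, he, ← mul_assoc, he]
      simp
    have hgh : h * (e + h - e * h) = h := by
      rw [mul_sub, mul_add, hhe, hh2, ← mul_assoc, hhe, zero_mul, sub_zero, zero_add]
    refine ⟨e + h - e * h, ?_, ?_⟩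
    · rw [sub_mul, add_mul, mul_assoc, hgh, hge]
    · apply le_antisymm
      · rw [Submodule.span_le, Set.singleton_subset_iff]
        have heS : e ∈ Submodule.span R {e} ⊔ M :=
          le_sup_left (α := Submodule R R) (Submodule.mem_span_singleton_self e)
        have hhS : h ∈ Submodule.span R {e} ⊔ M := by
          have : h ∈ Submodule.map (rmul (1 - e)) M := by
            rw [hMh]; exact Submodule.mem_span_singleton_self h
          rcases this with ⟨m, hm, rfl⟩
          show m * (1 - e) ∈ _
          have h1 : m * (1 - e) = m - m * e := by rw [mul_sub, mul_one]
          rw [h1]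
          exact sub_mem (le_sup_right (α := Submodule R R) hm)
            (le_sup_left (α := Submodule R R) (mem_spanR.mpr ⟨m, rfl⟩))
        exact sub_mem (add_mem heS hhS)
          ((Submodule.span R {e} ⊔ M).smul_mem e hhS)
      · refine sup_le ?_ ?_
        · rw [Submodule.span_le, Set.singleton_subset_iff]
          exact mem_spanR.mpr ⟨e, hge⟩
        · intro m hm
          have h1 : m = m * e + m * (1 - e) := by rw [mul_sub, mul_one]; abel
          rw [h1]
          have hhg : h ∈ Submodule.span R {e + h - e * h} := mem_spanR.mpr ⟨h, hgh⟩
          have heg : e ∈ Submodule.span R {e + h - e * h} := mem_spanR.mpr ⟨e, hge⟩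
          refine add_mem ((Submodule.span R {e + h - e * h}).smul_mem m heg) ?_
          have : m * (1 - e) ∈ Submodule.map (rmul (1 - e)) M :=
            Submodule.mem_map_of_mem hm
          rw [hMh] at this
          obtain ⟨c, hc⟩ := mem_spanR.mp this
          rw [← hc]
          exact (Submodule.span R {e + h - e * h}).smul_mem c hhg
end SP2

/-- Atoms lie in the socle. -/
lemma atom_le_socle {N : Submodule Rᵐᵒᵖ R} (h : IsAtom N) : N ≤ rightSocle R :=
  le_sSup (by rw [Set.mem_setOf_eq, isSimpleModule_iff_isAtom]; exact h)

/-- The right socle is a left ideal (auxiliary induction). -/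
lemma socle_mul_left_aux (c : R) (s : Finset (Submodule Rᵐᵒᵖ R)) :
    ↑s ⊆ {N : Submodule Rᵐᵒᵖ R | IsSimpleModule Rᵐᵒᵖ N} →
    ∀ x ∈ (⨆ i ∈ s, (i : Submodule Rᵐᵒᵖ R)), c * x ∈ rightSocle R := by
  classical
  induction s using Finset.induction_on with
  | empty =>
    intro _ x hx
    simp only [Finset.notMem_empty, iSup_false, iSup_bot, Submodule.mem_bot] at hx
    rw [hx, mul_zero]
    exact Submodule.zero_mem _
  | @insert N t hNt ih =>
    intro hs x hx
    rw [Finset.iSup_insert] at hx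
    obtain ⟨y, hy, z, hz, rfl⟩ := Submodule.mem_sup.mp hx
    have hNs : IsAtom N := by
      rw [← isSimpleModule_iff_isAtom]
      exact hs (by simp)
    have hts : ↑t ⊆ {N : Submodule Rᵐᵒᵖ R | IsSimpleModule Rᵐᵒᵖ N} :=
      fun A hA => hs (by simp [hA])
    have hcz : c * z ∈ rightSocle R := ih hts z hz
    have hcy : c * y ∈ rightSocle R := by
      by_cases hmap : Submodule.map (lmul c) N = ⊥
      · have : lmul c y ∈ Submodule.map (lmul c) N := Submodule.mem_map_of_mem hy
        rw [hmap] at this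
        have h0 : c * y = 0 := Submodule.mem_bot _ |>.mp this
        rw [h0]; exact Submodule.zero_mem _
      · exact atom_le_socle (map_atom (lmul c) hNs hmap) ⟨y, hy, rfl⟩
    rw [mul_add]
    exact Submodule.add_mem _ hcy hcz

/-- The right socle is a left ideal. -/
lemma socle_mul_left (c : R) {x : R} (hx : x ∈ rightSocle R) : c * x ∈ rightSocle R := by
  classical
  rw [rightSocle, Submodule.mem_sSup_iff_exists_finset] at hx
  obtain ⟨s, hs, hsup⟩ := hx
  exact socle_mul_left_aux c s hs x hsup

/-- The key lemma, auxiliary induction. -/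
lemma exists_idem_aux (hsp : ∀ a : R, (∀ r, a * r * a = 0) → a = 0)
    (s : Finset (Submodule Rᵐᵒᵖ R)) :
    ↑s ⊆ {N : Submodule Rᵐᵒᵖ R | IsSimpleModule Rᵐᵒᵖ N} →
    ∀ x ∈ (⨆ i ∈ s, (i : Submodule Rᵐᵒᵖ R)),
      ∃ f : R, f * f = f ∧ (∀ c ∈ Submodule.span R {f}, c ∈ rightSocle R) ∧
        x ∈ Submodule.span R {f} := by
  classical
  induction s using Finset.induction_on with
  | empty =>
    intro _ x hx
    simp only [Finset.notMem_empty, iSup_false, iSup_bot, Submodule.mem_bot] at hx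
    refine ⟨0, by rw [mul_zero], ?_, ?_⟩
    · intro c hc
      rw [Submodule.span_zero_singleton, Submodule.mem_bot] at hc
      rw [hc]; exact Submodule.zero_mem _
    · rw [hx]; exact Submodule.mem_span_singleton_self 0
  | @insert N t hNt ih =>
    intro hs x hx
    rw [Finset.iSup_insert] at hx
    obtain ⟨y, hy, z, hz, rfl⟩ := Submodule.mem_sup.mp hx
    have hNs : IsAtom N := by
      rw [← isSimpleModule_iff_isAtom]
      exact hs (by simp)
    have hts : ↑t ⊆ {N : Submodule Rᵐᵒᵖ R | IsSimpleModule Rᵐᵒᵖ N} :=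
      fun A hA => hs (by simp [hA])
    obtain ⟨g, hg2, hgS, hzg⟩ := ih hts z hz
    by_cases hy0 : y = 0
    · refine ⟨g, hg2, hgS, ?_⟩
      rw [hy0, zero_add]; exact hzg
    · obtain ⟨e, he2, hNe⟩ := brauer_right hsp hNs
      have heatom : IsAtom (Submodule.span Rᵐᵒᵖ {e}) := hNe ▸ hNs
      have hReAtom : IsAtom (Submodule.span R {e}) := flip_atom hsp he2 heatom
      obtain ⟨r, hr⟩ := mem_spanOp.mp (hNe ▸ hy : y ∈ Submodule.span Rᵐᵒᵖ {e})
      have hRy : Submodule.span R {y} = Submodule.map (rmul r) (Submodule.span R {e}) := by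
        apply le_antisymm
        · rw [Submodule.span_le, Set.singleton_subset_iff]
          exact ⟨e, Submodule.mem_span_singleton_self e, hr⟩
        · rintro _ ⟨w, hw, rfl⟩
          obtain ⟨c, hc⟩ := mem_spanR.mp hw
          show w * r ∈ _
          rw [← hc, mul_assoc, hr]
          exact mem_spanR.mpr ⟨c, rfl⟩
      have hRyne : Submodule.span R {y} ≠ ⊥ := by
        rw [Ne, Submodule.span_singleton_eq_bot]; exact hy0
      have hRyAtom : IsAtom (Submodule.span R {y}) := by
        rw [hRy] at hRyne ⊢
        exact map_atom (rmul r) hReAtom hRyne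
      have hyS : y ∈ rightSocle R := atom_le_socle hNs hy
      have hRyS : ∀ c ∈ Submodule.span R {y}, c ∈ rightSocle R := by
        intro w hw
        obtain ⟨c, hc⟩ := mem_spanR.mp hw
        rw [← hc]
        exact socle_mul_left c hyS
      obtain ⟨f, hf2, hf⟩ := step_merge hsp hg2 hRyAtom
      refine ⟨f, hf2, ?_, ?_⟩
      · intro w hw
        rw [hf] at hw
        obtain ⟨u, hu, w', hw', rfl⟩ := Submodule.mem_sup.mp hw
        exact Submodule.add_mem _ (hgS u hu) (hRyS w' hw')
      · rw [hf]
        exact Submodule.add_mem _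
          (le_sup_right (α := Submodule R R) (Submodule.mem_span_singleton_self y))
          (le_sup_left (α := Submodule R R) hzg)

/-- The key lemma: every element of the right socle is fixed by right multiplication
by some idempotent in the socle. -/
lemma exists_idem (hsp : ∀ a : R, (∀ r, a * r * a = 0) → a = 0) :
    ∀ x ∈ rightSocle R, ∃ f : R, f * f = f ∧ f ∈ rightSocle R ∧ x * f = x := by
  intro x hx
  classical
  rw [rightSocle, Submodule.mem_sSup_iff_exists_finset] at hx
  obtain ⟨s, hs, hsup⟩ := hx
  obtain ⟨f, hf2, hfS, hxf⟩ := exists_idem_aux hsp s hs x hsup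
  obtain ⟨c, hc⟩ := mem_spanR.mp hxf
  refine ⟨f, hf2, hfS f (Submodule.mem_span_singleton_self f), ?_⟩
  rw [← hc, mul_assoc, hf2]

end Stmt19Aux

/-- Let `R` be a semiprime right self-injective ring whose right socle `S` is an essential
right ideal. Then `S` is pure as a left submodule of `R`: `L·S = L ∩ S` for every right
ideal `L`. -/
theorem stmt19 (R : Type) [Ring R]
    (hsemiprime : ∀ I : TwoSidedIdeal R, tsiMul I I = ⊥ → I = ⊥)
    (hselfinj : Module.Injective Rᵐᵒᵖ R)
    (hess : ∀ K : Submodule Rᵐᵒᵖ R, rightSocle R ⊓ K = ⊥ → K = ⊥) :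
    ∀ L : Submodule Rᵐᵒᵖ R,
      Submodule.span Rᵐᵒᵖ {z : R | ∃ l ∈ L, ∃ s ∈ rightSocle R, z = l * s} =
        L ⊓ rightSocle R := by
  intro L
  have hsp := Stmt19Aux.hsp_of hsemiprime
  apply le_antisymm
  · rw [Submodule.span_le]
    rintro _ ⟨l, hl, s, hs, rfl⟩
    constructor
    · exact L.smul_mem (MulOpposite.op s) hl
    · exact Stmt19Aux.socle_mul_left l hs
  · rintro x ⟨hxL, hxS⟩
    obtain ⟨f, hf2, hfS, hxf⟩ := Stmt19Aux.exists_idem hsp x hxS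
    have : x * f ∈ Submodule.span Rᵐᵒᵖ {z : R | ∃ l ∈ L, ∃ s ∈ rightSocle R, z = l * s} :=
      Submodule.subset_span ⟨x, hxL, f, hfS, rfl⟩
    rwa [hxf] at this
end
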